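/- arXiv:2502.15206 — 10 statements merged into one kernel-verified Lean document; each statement's English description precedes it below -/
import Mathlib

section
/- Let n ≥ 1, let Q, H ∈ S^n, and let 𝓑 ⊆ S^n. Assume J_+(𝓑) is rank-one generated, i.e. J_+(𝓑) = convexHull(J_+(𝓑) ∩ Γ^n). Define the SDP value set S = {Q•X : X ∈ J_+(𝓑), H•X = 1} and the QCQP value set T = {Q•X : X ∈ Γ^n ∩ J_+(𝓑), H•X = 1}. If S is nonempty and bounded below, then T is nonempty and inf T = inf S. -/
/-!
Every `X ∈ J₊(𝓑)` with `H • X = 1` is a convex combination `∑ wᵢ zᵢ` of rank-one points `zᵢ`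
of the cone. Since `∑ wᵢ (H • zᵢ) = 1`, a value `Q • X < m` forces some `zᵢ` with
`Q • zᵢ < m (H • zᵢ)`. If `H • zᵢ ≤ 0`, moving from `X` along `zᵢ` while rescaling to stay on
`H • X = 1` would make the objective unbounded below; so `H • zᵢ > 0`, and `zᵢ / (H • zᵢ)` is a
rank-one feasible point of value `< m`.
-/

open Matrix

section Pairing

variable {m n R : Type*} [Fintype m] [Fintype n] [CommSemiring R]

def entrywisePairing (A : Matrix m n R) : Matrix m n R →ₗ[R] R where
  toFun X := ∑ i, ∑ j, A i j * X i j
  map_add' X Y := by simp only [Matrix.add_apply, mul_add, Finset.sum_add_distrib]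
  map_smul' c X := by
    simp only [Matrix.smul_apply, smul_eq_mul, Finset.mul_sum, mul_left_comm, RingHom.id_apply]

end Pairing

def constrainedPSDCone {n : Type*} [Fintype n] (𝓑 : Set (Matrix n n ℝ)) :
    PointedCone ℝ (Matrix n n ℝ) where
  carrier := {X | X.PosSemidef ∧ ∀ B ∈ 𝓑, 0 ≤ entrywisePairing B X}
  add_mem' hX hY := ⟨hX.1.add hY.1, fun B hB => by
    rw [map_add]; exact add_nonneg (hX.2 B hB) (hY.2 B hB)⟩
  zero_mem' := ⟨PosSemidef.zero, fun B _ => by rw [map_zero]⟩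
  smul_mem' c X hX := ⟨hX.1.smul c.2, fun B hB => by
    rw [Nonneg.mk_smul, map_smul]; exact mul_nonneg c.2 (hX.2 B hB)⟩

theorem Matrix.smul_vecMulVec_self {n : Type*} {c : ℝ} (hc : 0 ≤ c) (x : n → ℝ) :
    c • vecMulVec x x = vecMulVec (√c • x) (√c • x) := by
  rw [smul_vecMulVec, vecMulVec_smul, smul_smul, Real.mul_self_sqrt hc]

theorem nonneg_of_forall_le_add_mul {a b c : ℝ} (H : ∀ t : ℝ, 0 ≤ t → b ≤ a + t * c) :
    0 ≤ c := by
  by_contra! hc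
  have := H ((a - b + 1) / -c) (div_nonneg (by linarith [H 0 le_rfl]) (by linarith))
  rw [div_mul_eq_mul_div, div_neg, mul_div_assoc, div_self hc.ne, mul_one] at this
  linarith

theorem csInf_eq_of_subset_of_forall_exists_lt {α : Type*} [ConditionallyCompleteLinearOrder α]
    [NoMaxOrder α] {A B : Set α} (hBA : B ⊆ A) (hA : A.Nonempty) (hAb : BddBelow A)
    (H : ∀ a ∈ A, ∀ m, a < m → ∃ b ∈ B, b < m) : B.Nonempty ∧ sInf B = sInf A := by
  obtain ⟨a, ha⟩ := hA
  obtain ⟨m, ham⟩ := exists_gt a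
  obtain ⟨b, hb, -⟩ := H a ha m ham
  refine ⟨⟨b, hb⟩, le_antisymm ?_ (csInf_le_csInf hAb ⟨b, hb⟩ hBA)⟩
  by_contra! hlt
  obtain ⟨a', ha', ha'lt⟩ := exists_lt_of_csInf_lt ⟨a, ha⟩ hlt
  obtain ⟨b', hb', hb'lt⟩ := H a' ha' _ ha'lt
  exact (csInf_le (hAb.mono hBA) hb').not_gt hb'lt

section Cone

variable {E : Type*} [AddCommGroup E] [Module ℝ E]

def valuesOnSlice (C : Set E) (h q : E →ₗ[ℝ] ℝ) : Set ℝ :=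
  {v | ∃ X ∈ C, h X = 1 ∧ v = q X}

variable {K : PointedCone ℝ E} {Γ : Set E} {h q : E →ₗ[ℝ] ℝ}

theorem mul_le_of_bddBelow_valuesOnSlice (hS : BddBelow (valuesOnSlice K h q))
    {X Y : E} (hX : X ∈ K) (hX1 : h X = 1) (hY : Y ∈ K) (hY0 : h Y ≤ 0) :
    h Y * q X ≤ q Y := by
  obtain ⟨b, hb⟩ := hS
  refine sub_nonneg.1 (nonneg_of_forall_le_add_mul (a := q X) (b := b) fun t ht => ?_)
  have hZ : (1 - t * h Y) • X + t • Y ∈ K :=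
    K.add_mem (K.smul_mem (by nlinarith) hX) (K.smul_mem ht hY)
  refine (hb ⟨_, hZ, ?_, rfl⟩).trans_eq ?_
  · simp only [map_add, map_smul, smul_eq_mul, hX1]; ring
  · simp only [map_add, map_smul, smul_eq_mul]; ring

theorem exists_mem_inter_lt_of_bddBelow (hK : (K : Set E) ⊆ convexHull ℝ (K ∩ Γ))
    (hΓ : ∀ c : ℝ, 0 ≤ c → ∀ x ∈ Γ, c • x ∈ Γ) (hS : BddBelow (valuesOnSlice K h q))
    {X : E} (hX : X ∈ K) (hX1 : h X = 1) {m : ℝ} (hm : q X < m) :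
    ∃ W ∈ Γ ∩ K, h W = 1 ∧ q W < m := by
  obtain ⟨ι, _, w, z, hw0, -, hz, rfl⟩ := mem_convexHull_iff_exists_fintype.1 (hK hX)
  have hsum : ∑ i, w i * q (z i) < ∑ i, w i * (m * h (z i)) := by
    calc ∑ i, w i * q (z i) = q (∑ i, w i • z i) := by simp [map_sum]
      _ < m := hm
      _ = m * h (∑ i, w i • z i) := by rw [hX1, mul_one]
      _ = ∑ i, w i * (m * h (z i)) := by simp [map_sum, Finset.mul_sum, mul_left_comm]
  obtain ⟨i, -, hi⟩ := Finset.exists_lt_of_sum_lt hsum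
  have hwi : 0 < w i := (hw0 i).lt_of_ne (by rintro hw; simp [← hw] at hi)
  have hqz : q (z i) < m * h (z i) := lt_of_mul_lt_mul_left hi hwi.le
  have hhz : 0 < h (z i) := by
    by_contra! hle
    nlinarith [mul_le_of_bddBelow_valuesOnSlice hS hX hX1 (hz i).1 hle]
  have hc : 0 ≤ (h (z i))⁻¹ := inv_nonneg.2 hhz.le
  refine ⟨(h (z i))⁻¹ • z i, ⟨hΓ _ hc _ (hz i).2, K.smul_mem hc (hz i).1⟩, ?_, ?_⟩
  · simp [hhz.ne']
  · rw [map_smul, smul_eq_mul, inv_mul_lt_iff₀ hhz]; linarith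

theorem valuesOnSlice_inter_nonempty_and_csInf_eq (hK : (K : Set E) ⊆ convexHull ℝ (K ∩ Γ))
    (hΓ : ∀ c : ℝ, 0 ≤ c → ∀ x ∈ Γ, c • x ∈ Γ) (hne : (valuesOnSlice K h q).Nonempty)
    (hS : BddBelow (valuesOnSlice K h q)) :
    (valuesOnSlice (Γ ∩ K) h q).Nonempty ∧
      sInf (valuesOnSlice (Γ ∩ K) h q) = sInf (valuesOnSlice K h q) := by
  refine csInf_eq_of_subset_of_forall_exists_lt ?_ hne hS ?_
  · rintro v ⟨X, hX, hX1, rfl⟩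
    exact ⟨X, hX.2, hX1, rfl⟩
  · rintro v ⟨X, hX, hX1, rfl⟩ m hm
    obtain ⟨W, hW, hW1, hWm⟩ := exists_mem_inter_lt_of_bddBelow hK hΓ hS hX hX1 hm
    exact ⟨q W, ⟨W, hW, hW1, rfl⟩, hWm⟩

end Cone

theorem sdp_relaxation_exact_of_ROG_general (n : ℕ)
    (Q H : Matrix (Fin n) (Fin n) ℝ)
    (𝓑 : Set (Matrix (Fin n) (Fin n) ℝ))
    (Jplus : Set (Matrix (Fin n) (Fin n) ℝ))
    (hJ : Jplus = {X | X.PosSemidef ∧ ∀ B ∈ 𝓑, 0 ≤ ∑ i, ∑ j, B i j * X i j})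
    (Γ : Set (Matrix (Fin n) (Fin n) ℝ))
    (hΓ : Γ = {X | ∃ x : Fin n → ℝ, X = vecMulVec x x})
    (hROG : Jplus = convexHull ℝ (Jplus ∩ Γ))
    (S T : Set ℝ)
    (hS : S = {v | ∃ X ∈ Jplus, (∑ i, ∑ j, H i j * X i j) = 1 ∧
      v = ∑ i, ∑ j, Q i j * X i j})
    (hT : T = {v | ∃ X ∈ Γ ∩ Jplus, (∑ i, ∑ j, H i j * X i j) = 1 ∧
      v = ∑ i, ∑ j, Q i j * X i j})
    (hne : S.Nonempty) (hbdd : BddBelow S) :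
    T.Nonempty ∧ sInf T = sInf S := by
  subst hJ hΓ hS hT
  have hrankOne : ∀ c : ℝ, 0 ≤ c → ∀ X ∈ {X | ∃ x : Fin n → ℝ, X = vecMulVec x x},
      c • X ∈ {X | ∃ x : Fin n → ℝ, X = vecMulVec x x} := by
    rintro c hc _ ⟨x, rfl⟩
    exact ⟨√c • x, smul_vecMulVec_self hc x⟩
  exact valuesOnSlice_inter_nonempty_and_csInf_eq (K := constrainedPSDCone 𝓑)
    (h := entrywisePairing H) (q := entrywisePairing Q) hROG.subset hrankOne hne hbdd

/-- If `J₊(𝓑)` is rank-one generated, then whenever the SDP value set `S`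
is nonempty and bounded below, the QCQP value set `T` is nonempty and `inf T = inf S`. -/
theorem sdp_relaxation_exact_of_ROG (n : ℕ) (hn : 1 ≤ n)
    (Q H : Matrix (Fin n) (Fin n) ℝ) (hQ : Q.IsSymm) (hH : H.IsSymm)
    (𝓑 : Set (Matrix (Fin n) (Fin n) ℝ)) (h𝓑 : ∀ B ∈ 𝓑, B.IsSymm)
    (Jplus : Set (Matrix (Fin n) (Fin n) ℝ))
    (hJ : Jplus = {X | X.PosSemidef ∧ ∀ B ∈ 𝓑, 0 ≤ ∑ i, ∑ j, B i j * X i j})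
    (Γ : Set (Matrix (Fin n) (Fin n) ℝ))
    (hΓ : Γ = {X | ∃ x : Fin n → ℝ, X = vecMulVec x x})
    (hROG : Jplus = convexHull ℝ (Jplus ∩ Γ))
    (S T : Set ℝ)
    (hS : S = {v | ∃ X ∈ Jplus, (∑ i, ∑ j, H i j * X i j) = 1 ∧
      v = ∑ i, ∑ j, Q i j * X i j})
    (hT : T = {v | ∃ X ∈ Γ ∩ Jplus, (∑ i, ∑ j, H i j * X i j) = 1 ∧
      v = ∑ i, ∑ j, Q i j * X i j})
    (hne : S.Nonempty) (hbdd : BddBelow S) :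
    T.Nonempty ∧ sInf T = sInf S :=
  sdp_relaxation_exact_of_ROG_general n Q H 𝓑 Jplus hJ Γ hΓ hROG S T hS hT hne hbdd
end

section
/- Let n ≥ 2 and let 𝓑 ⊆ S^n satisfy Condition (B)' (for every pair of distinct A, B ∈ 𝓑, A_< ∩ B_≤ = ∅) and Condition (C)' (B_< ≠ ∅ for every B ∈ 𝓑). Then J_+(𝓑) is rank-one generated: J_+(𝓑) = convexHull(J_+(𝓑) ∩ Γ^n). -/
/-!
Write `X = Cᵀ C`. The matrices `G = C B Cᵀ`, `B ∈ 𝓑`, satisfy `tr G = B • X ≥ 0`, and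
Condition (B)', extended from the slice `x_n = 1` to all of `ℝⁿ` by scaling and density, says
that their negative cones `{x | xᵀ G x < 0}` are pairwise disjoint. It suffices to write `I` as a
convex combination of matrices `w wᵀ` with `wᵀ G w ≥ 0` for all `G`: conjugating back by `C`
turns it into a convex combination of rank-one points of `J₊(𝓑)` equal to `X`.

If `I` is not such a combination, Hahn–Banach gives a quadratic form `F` with `tr F > 0` and
`wᵀ F w ≤ 0` at every such `w`. Pick `x` with `xᵀ F x > 0`; it lies in the negative cone of
some `G₀`. For any `y` with `yᵀ F y > 0`, `F` stays positive on a segment from `x` to `±y`, which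
is therefore covered by the disjoint open negative cones; by connectedness `yᵀ G₀ y < 0`. So
`yᵀ G₀ y ≥ 0` forces `yᵀ F y ≤ 0`. Testing this on the `G₀`-null vectors
`√(-λⱼ) vᵢ ± √λᵢ vⱼ` built from an eigenbasis of `G₀` yields `tr F ≤ 0`, since `tr G₀ ≥ 0`.
-/

open Matrix Set
open scoped MatrixOrder

lemma sum_nonpos_of_mul_le_mul {ι : Type*} [Fintype ι] (l a : ι → ℝ) (hl : 0 ≤ ∑ i, l i)
    (ha : ∀ i, 0 ≤ l i → a i ≤ 0) (hla : ∀ i j, 0 < l i → l j < 0 → l i * a j ≤ l j * a i) :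
    ∑ i, a i ≤ 0 := by
  set P := Finset.univ.filter fun i => 0 ≤ l i
  set N := Finset.univ.filter fun i => ¬0 ≤ l i
  have hsplit (f : ι → ℝ) : ∑ i, f i = ∑ i ∈ P, f i + ∑ i ∈ N, f i :=
    (Finset.sum_filter_add_sum_filter_not _ _ f).symm
  have haP : ∑ i ∈ P, a i ≤ 0 := Finset.sum_nonpos fun i hi => ha i (Finset.mem_filter.1 hi).2
  rcases N.eq_empty_or_nonempty with hN | hN
  · simpa [hsplit, hN] using haP
  have hlN : ∑ j ∈ N, l j < 0 :=
    Finset.sum_neg (fun j hj => not_le.1 (Finset.mem_filter.1 hj).2) hN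
  have hpair : ∀ i ∈ P, ∀ j ∈ N, l i * a j ≤ l j * a i := by
    intro i hi j hj
    have hli := (Finset.mem_filter.1 hi).2
    have hlj := not_le.1 (Finset.mem_filter.1 hj).2
    rcases hli.lt_or_eq with hli | hli
    · exact hla i j hli hlj
    · rw [← hli, zero_mul]; nlinarith [ha i hli.le]
  have : (∑ i ∈ P, l i) * ∑ j ∈ N, a j ≤ (∑ j ∈ N, l j) * ∑ i ∈ P, a i := by
    simp only [Finset.sum_mul, Finset.mul_sum]
    rw [Finset.sum_comm]
    exact Finset.sum_le_sum fun i hi => Finset.sum_le_sum fun j hj => hpair i hi j hj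
  rw [hsplit] at hl ⊢
  nlinarith

theorem isCompact_convexHull {E : Type*} [AddCommGroup E] [Module ℝ E] [TopologicalSpace E]
    [IsTopologicalAddGroup E] [ContinuousSMul ℝ E] [FiniteDimensional ℝ E] {s : Set E}
    (hs : IsCompact s) : IsCompact (convexHull ℝ s) := by
  -- Carathéodory: a point of the hull is a convex combination of at most `finrank + 1` points
  have hcov : convexHull ℝ s = ⋃ k ∈ Finset.range (Module.finrank ℝ E + 2),
      (fun p : (Fin k → ℝ) × (Fin k → E) => ∑ i, p.1 i • p.2 i) ''
        (stdSimplex ℝ (Fin k) ×ˢ univ.pi fun _ => s) := by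
    refine Subset.antisymm (fun x hx => ?_) (iUnion₂_subset fun k _ => ?_)
    · obtain ⟨ι, _, z, w, hzs, hz, hw0, hw1, rfl⟩ := eq_pos_convex_span_of_mem_convexHull hx
      have hcard : Fintype.card ι < Module.finrank ℝ E + 2 := by
        have := Submodule.finrank_le (vectorSpan ℝ (range z))
        have := hz.card_le_finrank_succ
        omega
      set e := Fintype.equivFin ι
      refine mem_iUnion₂.2 ⟨_, Finset.mem_range.2 hcard, (w ∘ e.symm, z ∘ e.symm),
        ⟨⟨fun i => (hw0 _).le, ?_⟩, fun i _ => hzs ⟨_, rfl⟩⟩, ?_⟩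
      · simpa [Function.comp_def] using (e.symm.sum_comp w).trans hw1
      · exact e.symm.sum_comp fun i => w i • z i
    · rintro _ ⟨⟨c, z⟩, ⟨hc, hz⟩, rfl⟩
      exact (convex_convexHull ℝ s).sum_mem (fun i _ => hc.1 i) hc.2
        fun i _ => subset_convexHull ℝ s (hz i trivial)
  rw [hcov]
  exact (Finset.range _).isCompact_biUnion fun k _ =>
    ((isCompact_stdSimplex ℝ (Fin k)).prod (isCompact_univ_pi fun _ => hs)).image (by fun_prop)

section QuadraticForm

variable {n : Type*} [Fintype n]

def negCone (M : Matrix n n ℝ) : Set (n → ℝ) := {x | x ⬝ᵥ M *ᵥ x < 0}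

lemma smul_add_smul_dotProduct_mulVec (M : Matrix n n ℝ) (a c : ℝ) (x y : n → ℝ) :
    (a • x + c • y) ⬝ᵥ M *ᵥ (a • x + c • y) =
      a ^ 2 * (x ⬝ᵥ M *ᵥ x) + a * c * (x ⬝ᵥ M *ᵥ y + y ⬝ᵥ M *ᵥ x) + c ^ 2 * (y ⬝ᵥ M *ᵥ y) := by
  simp only [mulVec_add, mulVec_smul, dotProduct_add, add_dotProduct, dotProduct_smul,
    smul_dotProduct, smul_eq_mul]
  ring

lemma smul_dotProduct_mulVec_smul (M : Matrix n n ℝ) (c : ℝ) (x : n → ℝ) :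
    (c • x) ⬝ᵥ M *ᵥ (c • x) = c ^ 2 * (x ⬝ᵥ M *ᵥ x) := by
  simpa using smul_add_smul_dotProduct_mulVec M 0 c 0 x

lemma neg_dotProduct_mulVec_neg (M : Matrix n n ℝ) (x : n → ℝ) :
    -x ⬝ᵥ M *ᵥ -x = x ⬝ᵥ M *ᵥ x := by
  simp [mulVec_neg]

lemma continuous_dotProduct_mulVec_self (M : Matrix n n ℝ) :
    Continuous fun x : n → ℝ => x ⬝ᵥ M *ᵥ x := by
  fun_prop

lemma isOpen_negCone (M : Matrix n n ℝ) : IsOpen (negCone M) :=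
  isOpen_lt (continuous_dotProduct_mulVec_self M) continuous_const

lemma dotProduct_mulVec_pos_of_mem_segment {F : Matrix n n ℝ} {x y z : n → ℝ}
    (hx : 0 < x ⬝ᵥ F *ᵥ x) (hy : 0 < y ⬝ᵥ F *ᵥ y) (hxy : 0 ≤ x ⬝ᵥ F *ᵥ y + y ⬝ᵥ F *ᵥ x)
    (hz : z ∈ segment ℝ x y) : 0 < z ⬝ᵥ F *ᵥ z := by
  obtain ⟨a, b, ha, hb, hab, rfl⟩ := hz
  rw [smul_add_smul_dotProduct_mulVec]
  have : 0 < a ^ 2 * (x ⬝ᵥ F *ᵥ x) + b ^ 2 * (y ⬝ᵥ F *ᵥ y) := by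
    rcases ha.lt_or_eq with ha | rfl
    · positivity
    · simp_all
  nlinarith [mul_nonneg (mul_nonneg ha hb) hxy]

lemma mem_negCone_of_pairwiseDisjoint {𝓖 : Set (Matrix n n ℝ)} (h𝓖 : 𝓖.PairwiseDisjoint negCone)
    {F : Matrix n n ℝ} (hF : ∀ z, 0 < z ⬝ᵥ F *ᵥ z → ∃ G ∈ 𝓖, z ∈ negCone G)
    {G₀ : Matrix n n ℝ} (hG₀ : G₀ ∈ 𝓖) {x y : n → ℝ} (hx : 0 < x ⬝ᵥ F *ᵥ x)
    (hx₀ : x ∈ negCone G₀) (hy : 0 < y ⬝ᵥ F *ᵥ y) : y ∈ negCone G₀ := by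
  wlog hxy : 0 ≤ x ⬝ᵥ F *ᵥ y + y ⬝ᵥ F *ᵥ x generalizing y
  · rw [← neg_dotProduct_mulVec_neg] at hy
    change y ⬝ᵥ G₀ *ᵥ y < 0
    rw [← neg_dotProduct_mulVec_neg]
    exact this hy (by simp [mulVec_neg] at hxy ⊢; linarith)
  have hcover : segment ℝ x y ⊆ negCone G₀ ∪ ⋃ G ∈ 𝓖 \ {G₀}, negCone G := by
    intro z hz
    obtain ⟨G, hG, hzG⟩ := hF z (dotProduct_mulVec_pos_of_mem_segment hx hy hxy hz)
    by_cases hGG₀ : G = G₀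
    · exact Or.inl (hGG₀ ▸ hzG)
    · exact Or.inr (mem_biUnion ⟨hG, hGG₀⟩ hzG)
  have hdisj : Disjoint (negCone G₀) (⋃ G ∈ 𝓖 \ {G₀}, negCone G) :=
    disjoint_iUnion₂_right.2 fun G hG => h𝓖 hG₀ hG.1 (Ne.symm hG.2)
  exact (convex_segment x y).isPreconnected.subset_left_of_subset_union (isOpen_negCone G₀)
    (isOpen_biUnion fun G _ => isOpen_negCone G) hdisj hcover
    ⟨x, left_mem_segment ℝ x y, hx₀⟩ (right_mem_segment ℝ x y)

lemma sum_mul_vecMulVec_self (F : Matrix n n ℝ) (x : n → ℝ) :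
    ∑ i, ∑ j, F i j * vecMulVec x x i j = x ⬝ᵥ F *ᵥ x := by
  simp only [dotProduct, mulVec, vecMulVec_apply, Finset.mul_sum]
  exact Finset.sum_congr rfl fun i _ => Finset.sum_congr rfl fun j _ => by ring

lemma isCompact_setOf_nonneg_and_dotProduct_self_eq (𝓖 : Set (Matrix n n ℝ)) (r : ℝ) :
    IsCompact {w : n → ℝ | (∀ G ∈ 𝓖, 0 ≤ w ⬝ᵥ G *ᵥ w) ∧ w ⬝ᵥ w = r} := by
  refine Metric.isCompact_of_isClosed_isBounded ?_
    ((Metric.isBounded_closedBall (x := 0) (r := √r)).subset ?_)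
  · simp only [ofPred_and, ofPred_forall]
    exact (isClosed_biInter fun G _ => isClosed_le continuous_const
      (continuous_dotProduct_mulVec_self G)).inter (isClosed_eq (by fun_prop) continuous_const)
  · rintro w ⟨-, rfl⟩
    rw [mem_closedBall_zero_iff, pi_norm_le_iff_of_nonneg (Real.sqrt_nonneg _)]
    refine fun i => (Real.norm_eq_abs _).trans_le (Real.abs_le_sqrt ?_)
    rw [sq, dotProduct]
    exact Finset.single_le_sum (f := fun j => w j * w j) (fun j _ => mul_self_nonneg _)
      (Finset.mem_univ i)

variable [DecidableEq n]

lemma exists_dotProduct_mulVec_pos_of_trace_pos {F : Matrix n n ℝ} (hF : 0 < F.trace) :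
    ∃ x, 0 < x ⬝ᵥ F *ᵥ x := by
  have : ∑ _i : n, (0 : ℝ) < ∑ i, F i i := by simpa [trace] using hF
  obtain ⟨i, -, hi⟩ := Finset.exists_lt_of_sum_lt this
  exact ⟨Pi.single i 1, by simpa using hi⟩

lemma trace_nonpos_of_forall_dotProduct_mulVec {G F : Matrix n n ℝ} (hG : 0 ≤ G.trace)
    (hGF : ∀ y, 0 ≤ y ⬝ᵥ G *ᵥ y → y ⬝ᵥ F *ᵥ y ≤ 0) : F.trace ≤ 0 := by
  wlog hGsymm : G.IsHermitian generalizing G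
  · refine this (G := (2⁻¹ : ℝ) • (G + Gᵀ)) (by simpa [trace_add] using hG)
      (fun y hy => hGF y ?_) (by simp [IsHermitian, transpose_add, add_comm])
    simpa [add_mulVec, smul_mulVec, Matrix.dotProduct_transpose_mulVec] using hy
  set U : Matrix n n ℝ := (hGsymm.eigenvectorUnitary : Matrix n n ℝ)
  set v : n → n → ℝ := fun i => ⇑(hGsymm.eigenvectorBasis i)
  set l := hGsymm.eigenvalues
  have hGv : ∀ i j, v i ⬝ᵥ G *ᵥ v j = if i = j then l i else 0 := by
    intro i j
    rw [hGsymm.mulVec_eigenvectorBasis, dotProduct_smul, smul_eq_mul]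
    have := orthonormal_iff_ite.1 hGsymm.eigenvectorBasis.orthonormal j i
    rw [EuclideanSpace.inner_eq_star_dotProduct] at this
    split_ifs with h
    · subst h; simp_all [v, l]
    · simp_all [v, Ne.symm h]
  have htrF : F.trace = ∑ i, v i ⬝ᵥ F *ᵥ v i := by
    have hUU : U * Uᵀ = 1 := by
      simpa [star_eq_conjTranspose] using
        Unitary.mul_star_self_of_mem hGsymm.eigenvectorUnitary.2
    calc F.trace = (Uᵀ * F * U).trace := by rw [trace_mul_cycle, hUU, one_mul]
      _ = ∑ i, v i ⬝ᵥ F *ᵥ v i := by simp [trace, mul_mul_apply, U, v]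
  have htrG : G.trace = ∑ i, l i := by simpa using hGsymm.trace_eq_sum_eigenvalues
  rw [htrF]
  refine sum_nonpos_of_mul_le_mul l _ (htrG ▸ hG) (fun i hi => hGF _ (by simpa [hGv])) ?_
  intro i j hi hj
  have hij : i ≠ j := by rintro rfl; linarith
  have hnull : ∀ c, c ^ 2 = l i →
      (√(-l j) • v i + c • v j) ⬝ᵥ F *ᵥ (√(-l j) • v i + c • v j) ≤ 0 := by
    intro c hc
    refine hGF _ (le_of_eq ?_)
    rw [smul_add_smul_dotProduct_mulVec, hGv, hGv, hGv, hGv, if_neg hij, if_neg hij.symm,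
      if_pos rfl, if_pos rfl, hc, Real.sq_sqrt (by linarith)]
    ring
  have h₁ := hnull (√(l i)) (Real.sq_sqrt hi.le)
  have h₂ := hnull (-√(l i)) (by rw [neg_sq, Real.sq_sqrt hi.le])
  rw [smul_add_smul_dotProduct_mulVec, Real.sq_sqrt (by linarith), Real.sq_sqrt hi.le] at h₁
  rw [smul_add_smul_dotProduct_mulVec, Real.sq_sqrt (by linarith), neg_sq,
    Real.sq_sqrt hi.le] at h₂
  linarith

lemma trace_nonpos_of_pairwiseDisjoint {𝓖 : Set (Matrix n n ℝ)}
    (htr : ∀ G ∈ 𝓖, 0 ≤ G.trace) (h𝓖 : 𝓖.PairwiseDisjoint negCone) {F : Matrix n n ℝ}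
    (hF : ∀ w, (∀ G ∈ 𝓖, 0 ≤ w ⬝ᵥ G *ᵥ w) → w ⬝ᵥ F *ᵥ w ≤ 0) : F.trace ≤ 0 := by
  by_contra! hpos
  obtain ⟨x, hx⟩ := exists_dotProduct_mulVec_pos_of_trace_pos hpos
  have hbad : ∀ z, 0 < z ⬝ᵥ F *ᵥ z → ∃ G ∈ 𝓖, z ∈ negCone G := by
    intro z hz
    by_contra! h
    exact (hF z fun G hG => not_lt.1 (h G hG)).not_gt hz
  obtain ⟨G₀, hG₀, hx₀⟩ := hbad x hx
  refine hpos.not_ge (trace_nonpos_of_forall_dotProduct_mulVec (htr G₀ hG₀) fun y hy => ?_)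
  by_contra! hFy
  exact hy.not_gt (mem_negCone_of_pairwiseDisjoint h𝓖 hbad hG₀ hx hx₀ hFy)

lemma LinearMap.exists_eq_sum_mul (f : Matrix n n ℝ →ₗ[ℝ] ℝ) :
    ∃ F : Matrix n n ℝ, ∀ M, f M = ∑ i, ∑ j, F i j * M i j := by
  refine ⟨fun i j => f (Matrix.single i j 1), fun M => ?_⟩
  conv_lhs => rw [matrix_eq_sum_single M]
  simp only [map_sum]
  refine Finset.sum_congr rfl fun i _ => Finset.sum_congr rfl fun j _ => ?_
  rw [show Matrix.single i j (M i j) = M i j • Matrix.single i j (1 : ℝ) by simp [smul_single],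
    map_smul, smul_eq_mul, mul_comm]

lemma sum_mul_one (F : Matrix n n ℝ) : ∑ i, ∑ j, F i j * (1 : Matrix n n ℝ) i j = F.trace := by
  simp [one_apply, trace]

lemma one_mem_convexHull_vecMulVec [Nonempty n] {𝓖 : Set (Matrix n n ℝ)}
    (htr : ∀ G ∈ 𝓖, 0 ≤ G.trace) (h𝓖 : 𝓖.PairwiseDisjoint negCone) :
    (1 : Matrix n n ℝ) ∈ convexHull ℝ ((fun w => vecMulVec w w) ''
      {w : n → ℝ | (∀ G ∈ 𝓖, 0 ≤ w ⬝ᵥ G *ᵥ w) ∧ w ⬝ᵥ w = Fintype.card n}) := by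
  have : LocallyConvexSpace ℝ (Matrix n n ℝ) :=
    inferInstanceAs (LocallyConvexSpace ℝ (n → n → ℝ))
  by_contra hnot
  obtain ⟨f, u, hfu, hu⟩ := geometric_hahn_banach_closed_point (convex_convexHull ℝ _)
    (isCompact_convexHull ((isCompact_setOf_nonneg_and_dotProduct_self_eq 𝓖 _).image
      (by fun_prop))).isClosed hnot
  have hN : (0 : ℝ) < Fintype.card n := by exact_mod_cast Fintype.card_pos
  obtain ⟨F, hF⟩ :=
    (f.toLinearMap - (u / Fintype.card n) • traceLinearMap n ℝ ℝ).exists_eq_sum_mul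
  have hFw : ∀ w : n → ℝ, w ⬝ᵥ w = Fintype.card n → w ⬝ᵥ F *ᵥ w = f (vecMulVec w w) - u := by
    intro w hw
    rw [← sum_mul_vecMulVec_self, ← hF]
    simp [trace_vecMulVec, hw, hN.ne']
  have hFgood : ∀ w, (∀ G ∈ 𝓖, 0 ≤ w ⬝ᵥ G *ᵥ w) → w ⬝ᵥ F *ᵥ w ≤ 0 := by
    intro w hw
    rcases eq_or_ne w 0 with rfl | hw0
    · simp
    have hpos : 0 < w ⬝ᵥ w := (Finset.sum_nonneg fun i _ => mul_self_nonneg (w i)).lt_of_ne'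
      (dotProduct_self_eq_zero.not.2 hw0)
    set c := √(Fintype.card n / w ⬝ᵥ w)
    have hc : c ^ 2 = Fintype.card n / w ⬝ᵥ w := Real.sq_sqrt (by positivity)
    have hc₀ : 0 < c ^ 2 := by rw [hc]; positivity
    have hsphere : (c • w) ⬝ᵥ (c • w) = Fintype.card n := by
      simp only [smul_dotProduct, dotProduct_smul, smul_eq_mul, ← mul_assoc, ← sq]
      rw [hc, div_mul_cancel₀ _ hpos.ne']
    have hgood : ∀ G ∈ 𝓖, 0 ≤ (c • w) ⬝ᵥ G *ᵥ (c • w) := fun G hG => by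
      rw [smul_dotProduct_mulVec_smul]; exact mul_nonneg hc₀.le (hw G hG)
    have := hfu _ (subset_convexHull ℝ _ ⟨_, ⟨hgood, hsphere⟩, rfl⟩)
    rw [← sub_neg, ← hFw _ hsphere, smul_dotProduct_mulVec_smul] at this
    exact (neg_of_mul_neg_right this hc₀.le).le
  have htrF : F.trace = f 1 - u := by
    rw [← sum_mul_one, ← hF]
    simp [hN.ne']
  linarith [trace_nonpos_of_pairwiseDisjoint htr h𝓖 hFgood]

end QuadraticForm

section Conjugation

variable {n : Type*} [Fintype n]

lemma dotProduct_mul_mul_transpose_mulVec (C B : Matrix n n ℝ) (x : n → ℝ) :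
    x ⬝ᵥ (C * B * Cᵀ) *ᵥ x = (Cᵀ *ᵥ x) ⬝ᵥ B *ᵥ (Cᵀ *ᵥ x) := by
  rw [← mulVec_mulVec, ← mulVec_mulVec, dotProduct_mulVec, mulVec_transpose]

lemma trace_mul_mul_transpose (C B : Matrix n n ℝ) :
    (C * B * Cᵀ).trace = ∑ i, ∑ j, B i j * (Cᵀ * C) i j := by
  rw [trace_mul_cycle, trace_mul_comm]
  simp only [trace, diag, mul_apply, transpose_apply, Finset.mul_sum]
  exact Finset.sum_congr rfl fun _ _ => Finset.sum_congr rfl fun _ _ =>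
    Finset.sum_congr rfl fun _ _ => by ring

lemma transpose_mul_vecMulVec_mul (C : Matrix n n ℝ) (w : n → ℝ) :
    Cᵀ * vecMulVec w w * C = vecMulVec (Cᵀ *ᵥ w) (Cᵀ *ᵥ w) := by
  rw [mul_vecMulVec, vecMulVec_mul, mulVec_transpose]

lemma transpose_mul_vecMulVec_mul_mem {𝓑 : Set (Matrix n n ℝ)} {C : Matrix n n ℝ}
    {w : n → ℝ} (hw : ∀ B ∈ 𝓑, 0 ≤ w ⬝ᵥ (C * B * Cᵀ) *ᵥ w) :
    Cᵀ * vecMulVec w w * C ∈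
      {X : Matrix n n ℝ | X.PosSemidef ∧ ∀ B ∈ 𝓑, 0 ≤ ∑ i, ∑ j, B i j * X i j}
        ∩ {X | ∃ x, X = vecMulVec x x} := by
  rw [transpose_mul_vecMulVec_mul]
  refine ⟨⟨?_, fun B hB => ?_⟩, _, rfl⟩
  · simpa using posSemidef_vecMulVec_self_star (Cᵀ *ᵥ w)
  · rw [sum_mul_vecMulVec_self, ← dotProduct_mul_mul_transpose_mulVec]
    exact hw B hB

lemma convex_setOf_posSemidef_sum_mul_nonneg (𝓑 : Set (Matrix n n ℝ)) :
    Convex ℝ {X : Matrix n n ℝ | X.PosSemidef ∧ ∀ B ∈ 𝓑, 0 ≤ ∑ i, ∑ j, B i j * X i j} := by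
  rintro X ⟨hX, hX𝓑⟩ Y ⟨hY, hY𝓑⟩ a b ha hb -
  refine ⟨(hX.smul ha).add (hY.smul hb), fun B hB => ?_⟩
  simp only [Matrix.add_apply, Matrix.smul_apply, smul_eq_mul, mul_add, Finset.sum_add_distrib,
    mul_left_comm _ a, mul_left_comm _ b, ← Finset.mul_sum]
  exact add_nonneg (mul_nonneg ha (hX𝓑 B hB)) (mul_nonneg hb (hY𝓑 B hB))

end Conjugation

lemma disjoint_negCone_of_snoc {m : ℕ} {A B : Matrix (Fin (m + 1)) (Fin (m + 1)) ℝ}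
    (h : ∀ u : Fin m → ℝ, ¬((Fin.snoc u 1) ⬝ᵥ A.mulVec (Fin.snoc u 1) < 0 ∧
      (Fin.snoc u 1) ⬝ᵥ B.mulVec (Fin.snoc u 1) ≤ 0)) :
    Disjoint (negCone A) (negCone B) := by
  rw [Set.disjoint_iff_inter_eq_empty]
  by_contra hne
  have hdense : Dense {x : Fin (m + 1) → ℝ | x (Fin.last m) ≠ 0} :=
    (dense_compl_singleton 0).preimage (isOpenMap_eval _)
  obtain ⟨x, ⟨hxA, hxB⟩, hx⟩ := hdense.inter_open_nonempty _
    ((isOpen_negCone A).inter (isOpen_negCone B)) (nonempty_iff_ne_empty.2 hne)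
  set c := x (Fin.last m)
  have hc : c ≠ 0 := hx
  have hxc : x = c • Fin.snoc (fun i => x i.castSucc / c) 1 := by
    ext i
    refine Fin.lastCases ?_ (fun j => ?_) i <;> simp [field, c]
  replace hxA : x ⬝ᵥ A *ᵥ x < 0 := hxA
  replace hxB : x ⬝ᵥ B *ᵥ x < 0 := hxB
  rw [hxc, smul_dotProduct_mulVec_smul] at hxA hxB
  exact h _ ⟨neg_of_mul_neg_right hxA (sq_nonneg c), (neg_of_mul_neg_right hxB (sq_nonneg c)).le⟩

theorem ROG_of_conditionB'_and_C'_general (m : ℕ)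
    (𝓑 : Set (Matrix (Fin (m + 1)) (Fin (m + 1)) ℝ))
    (hB' : ∀ A ∈ 𝓑, ∀ B ∈ 𝓑, A ≠ B → ∀ u : Fin m → ℝ,
      ¬((Fin.snoc u 1) ⬝ᵥ A.mulVec (Fin.snoc u 1) < 0 ∧
        (Fin.snoc u 1) ⬝ᵥ B.mulVec (Fin.snoc u 1) ≤ 0)) :
    {X : Matrix (Fin (m + 1)) (Fin (m + 1)) ℝ |
        X.PosSemidef ∧ ∀ B ∈ 𝓑, 0 ≤ ∑ i, ∑ j, B i j * X i j}
      = convexHull ℝ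
        ({X : Matrix (Fin (m + 1)) (Fin (m + 1)) ℝ |
            X.PosSemidef ∧ ∀ B ∈ 𝓑, 0 ≤ ∑ i, ∑ j, B i j * X i j}
          ∩ {X : Matrix (Fin (m + 1)) (Fin (m + 1)) ℝ |
            ∃ x : Fin (m + 1) → ℝ, X = vecMulVec x x}) := by
  refine Subset.antisymm (fun X hX => ?_)
    (convexHull_min inter_subset_left (convex_setOf_posSemidef_sum_mul_nonneg 𝓑))
  obtain ⟨C, rfl⟩ := CStarAlgebra.nonneg_iff_eq_star_mul_self.mp hX.1.nonneg
  rw [star_eq_conjTranspose, conjTranspose_eq_transpose_of_trivial] at hX ⊢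
  have htr : ∀ G ∈ (fun B => C * B * Cᵀ) '' 𝓑, 0 ≤ G.trace := by
    rintro _ ⟨B, hB, rfl⟩
    rw [trace_mul_mul_transpose]
    exact hX.2 B hB
  have hdisj : ((fun B => C * B * Cᵀ) '' 𝓑).PairwiseDisjoint negCone := by
    rintro _ ⟨A, hA, rfl⟩ _ ⟨B, hB, rfl⟩ hAB
    have := (disjoint_negCone_of_snoc (hB' A hA B hB (by rintro rfl; exact hAB rfl))).preimage
      (Cᵀ *ᵥ ·)
    simpa [Function.onFun, negCone, preimage, dotProduct_mul_mul_transpose_mulVec] using this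
  let L : Matrix (Fin (m + 1)) (Fin (m + 1)) ℝ →ₗ[ℝ] Matrix (Fin (m + 1)) (Fin (m + 1)) ℝ :=
    LinearMap.mulLeft ℝ Cᵀ ∘ₗ LinearMap.mulRight ℝ C
  have hL : L 1 = Cᵀ * C := by simp [L]
  rw [← hL]
  refine convexHull_mono ?_
    (LinearMap.image_convexHull L _ ▸ mem_image_of_mem L (one_mem_convexHull_vecMulVec htr hdisj))
  rintro _ ⟨_, ⟨w, ⟨hw, -⟩, rfl⟩, rfl⟩
  simpa [L, ← mul_assoc] using transpose_mul_vecMulVec_mul_mem fun B hB => hw _ ⟨B, hB, rfl⟩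

/-- Conditions (B)' and (C)' together imply that `J₊(𝓑)` is rank-one
generated. Here `n = m + 1 ≥ 2`, and for `u ∈ ℝ^m`, `[u;1]` is `Fin.snoc u 1`. -/
theorem ROG_of_conditionB'_and_C' (m : ℕ) (hm : 1 ≤ m)
    (𝓑 : Set (Matrix (Fin (m + 1)) (Fin (m + 1)) ℝ)) (h𝓑 : ∀ B ∈ 𝓑, B.IsSymm)
    (hB' : ∀ A ∈ 𝓑, ∀ B ∈ 𝓑, A ≠ B → ∀ u : Fin m → ℝ,
      ¬((Fin.snoc u 1) ⬝ᵥ A.mulVec (Fin.snoc u 1) < 0 ∧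
        (Fin.snoc u 1) ⬝ᵥ B.mulVec (Fin.snoc u 1) ≤ 0))
    (hC' : ∀ B ∈ 𝓑, ∃ u : Fin m → ℝ, (Fin.snoc u 1) ⬝ᵥ B.mulVec (Fin.snoc u 1) < 0) :
    {X : Matrix (Fin (m + 1)) (Fin (m + 1)) ℝ |
        X.PosSemidef ∧ ∀ B ∈ 𝓑, 0 ≤ ∑ i, ∑ j, B i j * X i j}
      = convexHull ℝ
        ({X : Matrix (Fin (m + 1)) (Fin (m + 1)) ℝ |
            X.PosSemidef ∧ ∀ B ∈ 𝓑, 0 ≤ ∑ i, ∑ j, B i j * X i j}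
          ∩ {X : Matrix (Fin (m + 1)) (Fin (m + 1)) ℝ |
            ∃ x : Fin (m + 1) → ℝ, X = vecMulVec x x}) :=
  ROG_of_conditionB'_and_C'_general m 𝓑 hB'
end

section
/- Let n ≥ 1 and let 𝓑 ⊆ S^n satisfy Condition (D): there exist weights α_B > 0 (B ∈ 𝓑) such that α_A A + α_B B ∈ S^n_+ for every pair of distinct A, B ∈ 𝓑. Then 𝓑 satisfies Condition (B): for every B ∈ 𝓑 and every X ∈ S^n_+ with B•X = 0, one has A•X ≥ 0 for all A ∈ 𝓑. -/
open Matrix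

open scoped ComplexOrder in
/-- The pairing is the sum of the entries of `M ⊙ X`, positive semidefinite by the Schur product
theorem. -/
theorem Matrix.PosSemidef.sum_sum_mul_nonneg {ι 𝕜 : Type*} [Fintype ι] [RCLike 𝕜]
    {M X : Matrix ι ι 𝕜} (hM : M.PosSemidef) (hX : X.PosSemidef) :
    0 ≤ ∑ i, ∑ j, M i j * X i j := by
  simpa [dotProduct, mulVec, Finset.mul_sum] using
    (hM.hadamard hX).dotProduct_mulVec_nonneg (1 : ι → 𝕜)

theorem sum_sum_smul_add_smul_mul {ι R : Type*} [Fintype ι] [CommSemiring R] (a b : R)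
    (A B X : Matrix ι ι R) :
    ∑ i, ∑ j, (a • A + b • B) i j * X i j =
      a * ∑ i, ∑ j, A i j * X i j + b * ∑ i, ∑ j, B i j * X i j := by
  simp only [Matrix.add_apply, Matrix.smul_apply, smul_eq_mul, add_mul, Finset.sum_add_distrib,
    Finset.mul_sum, mul_assoc]

theorem sum_sum_mul_nonneg_of_posSemidef_smul_add_smul {ι : Type*} [Fintype ι]
    {A B X : Matrix ι ι ℝ} {a b : ℝ} (ha : 0 < a) (hAB : (a • A + b • B).PosSemidef)
    (hX : X.PosSemidef) (hBX : ∑ i, ∑ j, B i j * X i j = 0) :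
    0 ≤ ∑ i, ∑ j, A i j * X i j := by
  have h := hAB.sum_sum_mul_nonneg hX
  rw [sum_sum_smul_add_smul_mul, hBX, mul_zero, add_zero] at h
  exact nonneg_of_mul_nonneg_right h ha

theorem conditionB_of_conditionD_general (n : ℕ)
    (𝓑 : Set (Matrix (Fin n) (Fin n) ℝ))
    (hD : ∃ α : Matrix (Fin n) (Fin n) ℝ → ℝ, (∀ B ∈ 𝓑, 0 < α B) ∧
      ∀ A ∈ 𝓑, ∀ B ∈ 𝓑, A ≠ B → (α A • A + α B • B).PosSemidef) :
    ∀ B ∈ 𝓑, ∀ X : Matrix (Fin n) (Fin n) ℝ, X.PosSemidef →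
      (∑ i, ∑ j, B i j * X i j) = 0 → ∀ A ∈ 𝓑, 0 ≤ ∑ i, ∑ j, A i j * X i j := by
  obtain ⟨α, hα, hpair⟩ := hD
  intro B hB X hX hBX A hA
  rcases eq_or_ne A B with rfl | hAB
  · exact hBX.ge
  · exact sum_sum_mul_nonneg_of_posSemidef_smul_add_smul (hα A hA) (hpair A hA B hB hAB) hX hBX

/-- Condition (D) implies Condition (B). -/
theorem conditionB_of_conditionD (n : ℕ) (hn : 1 ≤ n)
    (𝓑 : Set (Matrix (Fin n) (Fin n) ℝ)) (h𝓑 : ∀ B ∈ 𝓑, B.IsSymm)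
    (hD : ∃ α : Matrix (Fin n) (Fin n) ℝ → ℝ, (∀ B ∈ 𝓑, 0 < α B) ∧
      ∀ A ∈ 𝓑, ∀ B ∈ 𝓑, A ≠ B → (α A • A + α B • B).PosSemidef) :
    ∀ B ∈ 𝓑, ∀ X : Matrix (Fin n) (Fin n) ℝ, X.PosSemidef →
      (∑ i, ∑ j, B i j * X i j) = 0 → ∀ A ∈ 𝓑, 0 ≤ ∑ i, ∑ j, A i j * X i j :=
  conditionB_of_conditionD_general n 𝓑 hD
end

section
/- Let B ∈ S^n and let X ∈ S^n_+ have rank r with B•X ≥ 0. Then there exist vectors x_1, …, x_r ∈ ℝ^n such that X = Σ_{i=1}^r x_i x_iᵀ and x_iᵀ B x_i ≥ 0 for every i = 1, …, r. -/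
/-!
Write `X = ∑ᵢ yᵢ yᵢᵀ` with `rank X` terms (spectral theorem); then `B • X = ∑ᵢ q yᵢ` for the
quadratic form `q v = vᵀ B v`. While some `q yᵢ < 0`, the sum being `≥ 0` gives some `q yⱼ > 0`,
and rotating the pair `(yᵢ, yⱼ)` in its own plane changes neither `yᵢ yᵢᵀ + yⱼ yⱼᵀ` nor
`q yᵢ + q yⱼ`; by the intermediate value theorem some angle makes the new `q yᵢ` vanish. Each
rotation shrinks the set of indices with `q yₖ ≠ 0`, so the process ends with all `q xₖ ≥ 0`.
-/

open Matrix Finset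

theorem Fintype.sum_update_update {ι α M : Type*} [Fintype ι] [DecidableEq ι] [AddCommGroup M]
    (g : α → M) (y : ι → α) {i j : ι} (hij : i ≠ j) {u w : α}
    (h : g u + g w = g (y i) + g (y j)) :
    ∑ k, g (Function.update (Function.update y i u) j w k) = ∑ k, g (y k) := by
  have sum_update (z : ι → α) (l : ι) (v : α) :
      ∑ k, g (Function.update z l v k) = ∑ k, g (z k) - g (z l) + g v := by
    have hrest : ∑ k ∈ univ.erase l, g (Function.update z l v k) = ∑ k ∈ univ.erase l, g (z k) :=
      Finset.sum_congr rfl fun k hk => by rw [Function.update_of_ne (ne_of_mem_erase hk)]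
    rw [← add_sum_erase _ _ (mem_univ l), ← add_sum_erase _ (fun k => g (z k)) (mem_univ l),
      Function.update_self, hrest]
    abel
  rw [sum_update, sum_update, Function.update_of_ne hij.symm]
  calc _ = ∑ k, g (y k) + ((g u + g w) - (g (y i) + g (y j))) := by abel
    _ = _ := by rw [h, sub_self, add_zero]

namespace Matrix

section CommRing

variable {R n : Type*} [CommRing R]

theorem vecMulVec_rotate_add (a b : n → R) {c s : R} (h : c ^ 2 + s ^ 2 = 1) :
    vecMulVec (c • a + s • b) (c • a + s • b) + vecMulVec (-s • a + c • b) (-s • a + c • b) =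
      vecMulVec a a + vecMulVec b b := by
  ext i j
  simp only [add_apply, vecMulVec_apply, Pi.add_apply, Pi.smul_apply, smul_eq_mul]
  linear_combination (a i * a j + b i * b j) * h

variable [Fintype n]

theorem dotProduct_mulVec_smul_add_smul (B : Matrix n n R) (a b : n → R) (c s : R) :
    (c • a + s • b) ⬝ᵥ B *ᵥ (c • a + s • b) =
      c ^ 2 * (a ⬝ᵥ B *ᵥ a) + c * s * (a ⬝ᵥ B *ᵥ b + b ⬝ᵥ B *ᵥ a) + s ^ 2 * (b ⬝ᵥ B *ᵥ b) := by
  simp only [mulVec_add, mulVec_smul, dotProduct_add, add_dotProduct, dotProduct_smul,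
    smul_dotProduct, smul_eq_mul]
  ring

theorem dotProduct_mulVec_rotate_add (B : Matrix n n R) (a b : n → R) {c s : R}
    (h : c ^ 2 + s ^ 2 = 1) :
    (c • a + s • b) ⬝ᵥ B *ᵥ (c • a + s • b) + (-s • a + c • b) ⬝ᵥ B *ᵥ (-s • a + c • b) =
      a ⬝ᵥ B *ᵥ a + b ⬝ᵥ B *ᵥ b := by
  rw [dotProduct_mulVec_smul_add_smul, dotProduct_mulVec_smul_add_smul]
  linear_combination (a ⬝ᵥ B *ᵥ a + b ⬝ᵥ B *ᵥ b) * h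

theorem sum_sum_mul_sum_vecMulVec {ι : Type*} [Fintype ι] (B : Matrix n n R) (v w : ι → n → R) :
    ∑ i, ∑ j, B i j * (∑ k, vecMulVec (v k) (w k)) i j = ∑ k, v k ⬝ᵥ B *ᵥ w k := by
  simp only [Matrix.sum_apply, mul_sum]
  rw [sum_comm_cycle]
  refine Finset.sum_congr rfl fun k _ => ?_
  simp only [vecMulVec_apply, dotProduct, mulVec, mul_sum]
  exact Finset.sum_congr rfl fun i _ => Finset.sum_congr rfl fun j _ => by ring

end CommRing

theorem IsHermitian.eq_sum_eigenvalues_smul_vecMulVec {𝕜 n : Type*} [RCLike 𝕜]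
    [Fintype n] [DecidableEq n] {A : Matrix n n 𝕜} (hA : A.IsHermitian) :
    A = ∑ k, (hA.eigenvalues k : 𝕜) •
      vecMulVec (hA.eigenvectorBasis k).ofLp (star (hA.eigenvectorBasis k).ofLp) := by
  conv_lhs => rw [hA.spectral_theorem, Unitary.conjStarAlgAut_apply]
  ext i j
  simp only [mul_apply, sum_apply, smul_apply, vecMulVec_apply, eigenvectorUnitary_apply,
    star_apply, Pi.star_apply, RCLike.star_def]
  refine Fintype.sum_congr _ _ fun k => ?_
  simp only [diagonal_apply, Function.comp_apply, mul_ite, mul_zero, sum_ite_eq', mem_univ,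
    if_true, smul_eq_mul]
  ring

theorem PosSemidef.exists_eq_sum_vecMulVec_self {n : Type*} [Fintype n] [DecidableEq n]
    {X : Matrix n n ℝ} (hX : X.PosSemidef) :
    ∃ y : Fin X.rank → n → ℝ, X = ∑ i, vecMulVec (y i) (y i) := by
  set hH := hX.isHermitian
  let w k := √(hH.eigenvalues k) • (hH.eigenvectorBasis k).ofLp
  have hX_eq : X = ∑ k, vecMulVec (w k) (w k) := by
    conv_lhs => rw [hH.eq_sum_eigenvalues_smul_vecMulVec]
    refine Fintype.sum_congr _ _ fun k => ?_
    rw [smul_vecMulVec, vecMulVec_smul, smul_smul, Real.mul_self_sqrt (hX.eigenvalues_nonneg k)]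
    simp
  let e : Fin X.rank ≃ {k // hH.eigenvalues k ≠ 0} :=
    (Fintype.equivFinOfCardEq hH.rank_eq_card_non_zero_eigs.symm).symm
  refine ⟨fun i => w (e i), ?_⟩
  rw [Equiv.sum_comp e (fun k => vecMulVec (w k) (w k)),
    ← sum_subtype {k | hH.eigenvalues k ≠ 0} (by simp) fun k => vecMulVec (w k) (w k),
    sum_filter_of_ne, ← hX_eq]
  intro k _ hk
  contrapose! hk
  simp [w, hk]

section Real

variable {n : Type*} [Fintype n] (B : Matrix n n ℝ)

theorem exists_dotProduct_mulVec_cos_smul_add_sin_smul_eq_zero {a b : n → ℝ}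
    (ha : a ⬝ᵥ B *ᵥ a ≤ 0) (hb : 0 ≤ b ⬝ᵥ B *ᵥ b) :
    ∃ θ : ℝ, (Real.cos θ • a + Real.sin θ • b) ⬝ᵥ B *ᵥ (Real.cos θ • a + Real.sin θ • b) = 0 := by
  have hcont : Continuous fun θ : ℝ =>
      (Real.cos θ • a + Real.sin θ • b) ⬝ᵥ B *ᵥ (Real.cos θ • a + Real.sin θ • b) := by
    simp only [dotProduct_mulVec_smul_add_smul]
    fun_prop
  obtain ⟨θ, -, hθ⟩ := intermediate_value_Icc Real.pi_div_two_pos.le hcont.continuousOn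
    (by simpa using And.intro ha hb : (0 : ℝ) ∈ Set.Icc _ _)
  exact ⟨θ, hθ⟩

variable {ι : Type*} [Fintype ι] [DecidableEq ι]

theorem exists_rotate_ssubset_nonzero (y : ι → n → ℝ) {i j : ι}
    (hi : y i ⬝ᵥ B *ᵥ y i < 0) (hj : 0 < y j ⬝ᵥ B *ᵥ y j) :
    ∃ y' : ι → n → ℝ, ∑ k, vecMulVec (y' k) (y' k) = ∑ k, vecMulVec (y k) (y k) ∧
      ∑ k, y' k ⬝ᵥ B *ᵥ y' k = ∑ k, y k ⬝ᵥ B *ᵥ y k ∧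
      ({k | y' k ⬝ᵥ B *ᵥ y' k ≠ 0} : Finset ι) ⊂ ({k | y k ⬝ᵥ B *ᵥ y k ≠ 0} : Finset ι) := by
  have hij : i ≠ j := by rintro rfl; linarith
  obtain ⟨θ, hθ⟩ := exists_dotProduct_mulVec_cos_smul_add_sin_smul_eq_zero B hi.le hj.le
  have hcs := Real.cos_sq_add_sin_sq θ
  refine ⟨Function.update (Function.update y i (Real.cos θ • y i + Real.sin θ • y j)) j
      (-Real.sin θ • y i + Real.cos θ • y j),
    Fintype.sum_update_update (fun v => vecMulVec v v) y hij (vecMulVec_rotate_add _ _ hcs),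
    Fintype.sum_update_update (fun v => v ⬝ᵥ B *ᵥ v) y hij
      (dotProduct_mulVec_rotate_add _ _ _ hcs), ?_⟩
  refine (ssubset_iff_of_subset fun k hk => ?_).mpr
    ⟨i, by simpa using hi.ne, by simp [Function.update_of_ne hij, hθ]⟩
  simp only [mem_filter, mem_univ, true_and] at hk ⊢
  rcases eq_or_ne k j with rfl | hkj
  · exact hj.ne'
  rcases eq_or_ne k i with rfl | hki
  · simp [Function.update_of_ne hkj, hθ] at hk
  · simpa [Function.update_of_ne hkj, Function.update_of_ne hki] using hk

theorem exists_sum_vecMulVec_eq_forall_nonneg (y : ι → n → ℝ)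
    (hy : 0 ≤ ∑ i, y i ⬝ᵥ B *ᵥ y i) :
    ∃ x : ι → n → ℝ, ∑ i, vecMulVec (x i) (x i) = ∑ i, vecMulVec (y i) (y i) ∧
      ∀ i, 0 ≤ x i ⬝ᵥ B *ᵥ x i := by
  induction hs : ({k | y k ⬝ᵥ B *ᵥ y k ≠ 0} : Finset ι) using Finset.strongInduction
    generalizing y with
  | H s ih =>
  by_cases hall : ∀ i, 0 ≤ y i ⬝ᵥ B *ᵥ y i
  · exact ⟨y, rfl, hall⟩
  push Not at hall
  obtain ⟨i, hi⟩ := hall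
  obtain ⟨j, hj⟩ : ∃ j, 0 < y j ⬝ᵥ B *ᵥ y j := by
    by_contra! hnonpos
    exact hy.not_gt (sum_neg' (fun k _ => hnonpos k) ⟨i, mem_univ i, hi⟩)
  obtain ⟨y', hgram, hsum, hss⟩ := exists_rotate_ssubset_nonzero B y hi hj
  obtain ⟨x, hx, hxB⟩ := ih _ (hs ▸ hss) y' (hsum ▸ hy) rfl
  exact ⟨x, hx.trans hgram, hxB⟩

end Real

end Matrix

theorem rankOne_decomposition_nonneg_general (n r : ℕ)
    (B X : Matrix (Fin n) (Fin n) ℝ)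
    (hX : X.PosSemidef) (hr : X.rank = r)
    (hBX : 0 ≤ ∑ i, ∑ j, B i j * X i j) :
    ∃ x : Fin r → Fin n → ℝ,
      X = ∑ i, vecMulVec (x i) (x i) ∧ ∀ i, 0 ≤ (x i) ⬝ᵥ B.mulVec (x i) := by
  subst hr
  obtain ⟨y, hy⟩ := hX.exists_eq_sum_vecMulVec_self
  rw [hy, sum_sum_mul_sum_vecMulVec] at hBX
  obtain ⟨x, hx, hxB⟩ := exists_sum_vecMulVec_eq_forall_nonneg B y hBX
  exact ⟨x, hy.trans hx.symm, hxB⟩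

/-- rank-one decomposition of a PSD matrix `X` of rank `r` with
`B • X ≥ 0`, all of whose rank-one terms satisfy `xᵢᵀ B xᵢ ≥ 0`. -/
theorem rankOne_decomposition_nonneg (n r : ℕ)
    (B X : Matrix (Fin n) (Fin n) ℝ) (hB : B.IsSymm)
    (hX : X.PosSemidef) (hr : X.rank = r)
    (hBX : 0 ≤ ∑ i, ∑ j, B i j * X i j) :
    ∃ x : Fin r → Fin n → ℝ,
      X = ∑ i, vecMulVec (x i) (x i) ∧ ∀ i, 0 ≤ (x i) ⬝ᵥ B.mulVec (x i) :=
  rankOne_decomposition_nonneg_general n r B X hX hr hBX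
end

section
/- Let B ∈ S^n and let x_1, x_2 ∈ ℝ^n satisfy x_1ᵀBx_1 < 0 < x_2ᵀBx_2. Then there exists a real root s̄ of the quadratic equation (x_1ᵀBx_1)s² + 2(x_1ᵀBx_2)s + x_2ᵀBx_2 = 0, and for any such root, the vectors x̄_1 = (s̄ x_1 + x_2)/√(s̄²+1) and x̄_2 = (−x_1 + s̄ x_2)/√(s̄²+1) satisfy x̄_1ᵀBx̄_1 = 0 and x̄_1 x̄_1ᵀ + x̄_2 x̄_2ᵀ = x_1 x_1ᵀ + x_2 x_2ᵀ. -/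
open Matrix

/-!
Expanding `B` along the pencil `s x₁ + x₂` gives `(s x₁ + x₂)ᵀ B (s x₁ + x₂) = a s² + 2 b s + c`
with `a = x₁ᵀ B x₁`, `b = x₁ᵀ B x₂`, `c = x₂ᵀ B x₂`. Since `a c < 0` the discriminant is
positive, so a root `s̄` exists and `x̄₁` is `B`-isotropic. The pair `(x̄₁, x̄₂)` is obtained from
`(x₁, x₂)` by a rotation, and `x₁ x₁ᵀ + x₂ x₂ᵀ` is invariant under rotations.
-/

theorem exists_quadratic_eq_zero_of_mul_le_sq {a b c : ℝ} (ha : a ≠ 0) (hac : a * c ≤ b ^ 2) :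
    ∃ s : ℝ, a * s ^ 2 + 2 * b * s + c = 0 := by
  have hdiscrim : discrim a (2 * b) c = √(4 * (b ^ 2 - a * c)) * √(4 * (b ^ 2 - a * c)) := by
    rw [Real.mul_self_sqrt (by linarith), discrim]
    ring
  simpa only [sq] using exists_quadratic_eq_zero ha ⟨_, hdiscrim⟩

section QuadraticForm

variable {R ι : Type*} [CommRing R] [Fintype ι]

theorem dotProduct_mulVec_smul_smul (B : Matrix ι ι R) (t : R) (v : ι → R) :
    (t • v) ⬝ᵥ B *ᵥ (t • v) = t ^ 2 * (v ⬝ᵥ B *ᵥ v) := by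
  rw [mulVec_smul, smul_dotProduct, dotProduct_smul, smul_eq_mul, smul_eq_mul]
  ring

theorem Matrix.IsSymm.dotProduct_mulVec_smul_add {B : Matrix ι ι R} (hB : B.IsSymm) (s : R)
    (x y : ι → R) :
    (s • x + y) ⬝ᵥ B *ᵥ (s • x + y)
      = (x ⬝ᵥ B *ᵥ x) * s ^ 2 + 2 * (x ⬝ᵥ B *ᵥ y) * s + y ⬝ᵥ B *ᵥ y := by
  have hyx : y ⬝ᵥ B *ᵥ x = x ⬝ᵥ B *ᵥ y := by
    rw [dotProduct_mulVec, dotProduct_comm, ← mulVec_transpose, hB.eq]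
  simp only [mulVec_add, mulVec_smul, dotProduct_add, add_dotProduct, smul_dotProduct,
    dotProduct_smul, smul_eq_mul, hyx]
  ring

end QuadraticForm

section RankOne

variable {R ι : Type*} [CommRing R]

theorem vecMulVec_smul_smul (t : R) (v : ι → R) :
    vecMulVec (t • v) (t • v) = t ^ 2 • vecMulVec v v := by
  rw [smul_vecMulVec, vecMulVec_smul, smul_smul, sq]

theorem vecMulVec_rotate_add (a b : R) (x y : ι → R) :
    vecMulVec (a • x + b • y) (a • x + b • y) + vecMulVec (-(b • x) + a • y) (-(b • x) + a • y)
      = (a ^ 2 + b ^ 2) • (vecMulVec x x + vecMulVec y y) := by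
  ext i j
  simp only [Matrix.add_apply, Matrix.smul_apply, vecMulVec_apply, Pi.add_apply, Pi.neg_apply, Pi.smul_apply,
    smul_eq_mul]
  ring

end RankOne

/-- the rotation step in the rank-one decomposition procedure. -/
theorem rankOne_rotation_step (n : ℕ) (B : Matrix (Fin n) (Fin n) ℝ) (hB : B.IsSymm)
    (x₁ x₂ : Fin n → ℝ)
    (h₁ : x₁ ⬝ᵥ B.mulVec x₁ < 0) (h₂ : 0 < x₂ ⬝ᵥ B.mulVec x₂) :
    (∃ s : ℝ, (x₁ ⬝ᵥ B.mulVec x₁) * s ^ 2 + 2 * (x₁ ⬝ᵥ B.mulVec x₂) * s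
        + x₂ ⬝ᵥ B.mulVec x₂ = 0) ∧
    ∀ s : ℝ, (x₁ ⬝ᵥ B.mulVec x₁) * s ^ 2 + 2 * (x₁ ⬝ᵥ B.mulVec x₂) * s
        + x₂ ⬝ᵥ B.mulVec x₂ = 0 →
      ((Real.sqrt (s ^ 2 + 1))⁻¹ • (s • x₁ + x₂)) ⬝ᵥ
          B.mulVec ((Real.sqrt (s ^ 2 + 1))⁻¹ • (s • x₁ + x₂)) = 0 ∧
      vecMulVec ((Real.sqrt (s ^ 2 + 1))⁻¹ • (s • x₁ + x₂))
          ((Real.sqrt (s ^ 2 + 1))⁻¹ • (s • x₁ + x₂))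
        + vecMulVec ((Real.sqrt (s ^ 2 + 1))⁻¹ • (-x₁ + s • x₂))
          ((Real.sqrt (s ^ 2 + 1))⁻¹ • (-x₁ + s • x₂))
        = vecMulVec x₁ x₁ + vecMulVec x₂ x₂ := by
  refine ⟨exists_quadratic_eq_zero_of_mul_le_sq h₁.ne (by nlinarith), fun s hs => ⟨?_, ?_⟩⟩
  · rw [dotProduct_mulVec_smul_smul, hB.dotProduct_mulVec_smul_add, hs, mul_zero]
  · have hnorm : (√(s ^ 2 + 1))⁻¹ ^ 2 = (s ^ 2 + 1)⁻¹ := by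
      rw [inv_pow, Real.sq_sqrt (by positivity)]
    have hrot := vecMulVec_rotate_add s 1 x₁ x₂
    rw [one_smul, one_smul, one_pow] at hrot
    rw [vecMulVec_smul_smul, vecMulVec_smul_smul, hnorm, ← smul_add, hrot,
      inv_smul_smul₀ (by positivity)]
end

section
/- For a ∈ ℤ and r ≥ 0 define the 3×3 symmetric matrix B(a,r) with rows (a² − 1/4, −a, 0), (−a, 1, 0), (0, 0, r²). Then for all integers a_1 ≠ a_2 and all reals r_1, r_2 ≥ 0, the matrix B(a_1,r_1) + B(a_2,r_2) is positive semidefinite. -/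
open Matrix

/-- The matrix `B(a,r)` of Instance 2.4 (hyperbola family). -/
noncomputable def hypMat (a : ℤ) (r : ℝ) : Matrix (Fin 3) (Fin 3) ℝ :=
  !![(a : ℝ) ^ 2 - 1 / 4, -(a : ℝ), 0;
     -(a : ℝ), 1, 0;
     0, 0, r ^ 2]

/-- The two residuals `a x - y` and `b x - y` differ by `(a - b) x`, so their squares cannot
both be small when `a` and `b` are at distance at least one. -/
lemma sq_le_two_mul_sq_add_sq_of_one_le_sq_sub {a b : ℝ} (hab : 1 ≤ (a - b) ^ 2) (x y : ℝ) :
    x ^ 2 ≤ 2 * ((a * x - y) ^ 2 + (b * x - y) ^ 2) :=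
  calc x ^ 2 ≤ (a - b) ^ 2 * x ^ 2 := le_mul_of_one_le_left (sq_nonneg x) hab
    _ = ((a * x - y) + -(b * x - y)) ^ 2 := by ring
    _ ≤ 2 * ((a * x - y) ^ 2 + (-(b * x - y)) ^ 2) := add_sq_le
    _ = 2 * ((a * x - y) ^ 2 + (b * x - y) ^ 2) := by rw [neg_sq]

lemma one_le_sq_intCast_sub {a b : ℤ} (h : a ≠ b) : (1 : ℝ) ≤ ((a : ℝ) - b) ^ 2 := by
  rw [one_le_sq_iff_one_le_abs]
  exact_mod_cast Int.one_le_abs (sub_ne_zero.mpr h)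

lemma hypMat_isHermitian (a : ℤ) (r : ℝ) : (hypMat a r).IsHermitian := by
  ext i j
  fin_cases i <;> fin_cases j <;> simp [hypMat]

lemma dotProduct_hypMat_mulVec (a : ℤ) (r : ℝ) (x : Fin 3 → ℝ) :
    x ⬝ᵥ hypMat a r *ᵥ x = (a * x 0 - x 1) ^ 2 - x 0 ^ 2 / 4 + r ^ 2 * x 2 ^ 2 := by
  simp [hypMat, mulVec, dotProduct, Fin.sum_univ_three]
  ring

theorem hypMat_add_posSemidef_general (a₁ a₂ : ℤ) (ha : a₁ ≠ a₂)
    (r₁ r₂ : ℝ) :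
    (hypMat a₁ r₁ + hypMat a₂ r₂).PosSemidef := by
  refine .of_dotProduct_mulVec_nonneg ((hypMat_isHermitian a₁ r₁).add (hypMat_isHermitian a₂ r₂))
    fun x => ?_
  have key := sq_le_two_mul_sq_add_sq_of_one_le_sq_sub (one_le_sq_intCast_sub ha) (x 0) (x 1)
  rw [star_trivial, add_mulVec, dotProduct_add, dotProduct_hypMat_mulVec,
    dotProduct_hypMat_mulVec]
  linarith [mul_nonneg (sq_nonneg r₁) (sq_nonneg (x 2)),
    mul_nonneg (sq_nonneg r₂) (sq_nonneg (x 2))]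

/-- for distinct integers `a₁ ≠ a₂` and `r₁, r₂ ≥ 0`,
`B(a₁,r₁) + B(a₂,r₂)` is positive semidefinite. -/
theorem hypMat_add_posSemidef (a₁ a₂ : ℤ) (ha : a₁ ≠ a₂)
    (r₁ r₂ : ℝ) (hr₁ : 0 ≤ r₁) (hr₂ : 0 ≤ r₂) :
    (hypMat a₁ r₁ + hypMat a₂ r₂).PosSemidef :=
  hypMat_add_posSemidef_general a₁ a₂ ha r₁ r₂
end

section
/- Let n ≥ 2. For a ∈ ℝ^{n-1} and ρ > 0, define B(a,ρ) ∈ S^n as the block matrix with blocks (I_{n-1}, −a; −aᵀ, aᵀa − ρ²), where I_{n-1} is the (n−1)×(n−1) identity. Then for all integer vectors a_1, a_2 ∈ ℤ^{n-1} with a_1 ≠ a_2 and all ρ_1, ρ_2 ∈ (0, 1/2], the matrix B(a_1,ρ_1) + B(a_2,ρ_2) is positive semidefinite. -/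
open Matrix

/-- The ball-constraint matrix `B(a,ρ) ∈ S^{m+1}` with blocks
`(I_m, -a; -aᵀ, aᵀa - ρ²)`. -/
noncomputable def ballMat (m : ℕ) (a : Fin m → ℝ) (ρ : ℝ) :
    Matrix (Fin (m + 1)) (Fin (m + 1)) ℝ := fun i j =>
  if hi : (i : ℕ) < m then
    if hj : (j : ℕ) < m then (if i = j then 1 else 0)
    else -(a ⟨i, hi⟩)
  else
    if hj : (j : ℕ) < m then -(a ⟨j, hj⟩)
    else (∑ k, (a k) ^ 2) - ρ ^ 2

/-!
Writing `x = (y, t)`, the quadratic form of `B(a, ρ)` is `‖y - t a‖² - ρ² t²`. By the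
parallelogram inequality `‖u‖² + ‖v‖² ≥ ‖u - v‖² / 2`, the form of `B(a₁,ρ₁) + B(a₂,ρ₂)` is
at least `t² (‖a₁ - a₂‖² / 2 - ρ₁² - ρ₂²)`, which is nonnegative because distinct integer
vectors are at distance at least `1` while `ρ₁² + ρ₂² ≤ 1/2`.
-/

lemma ballMat_isHermitian (m : ℕ) (a : Fin m → ℝ) (ρ : ℝ) :
    (ballMat m a ρ).IsHermitian := by
  ext i j
  simp only [ballMat, conjTranspose_apply, star_trivial]
  rcases Nat.lt_or_ge (i : ℕ) m with hi | hi <;>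
    rcases Nat.lt_or_ge (j : ℕ) m with hj | hj <;>
      simp [hi, hj, Nat.not_lt.mpr, eq_comm, Fin.ext_iff]

lemma dotProduct_ballMat_mulVec (m : ℕ) (a : Fin m → ℝ) (ρ : ℝ) (x : Fin (m + 1) → ℝ) :
    x ⬝ᵥ (ballMat m a ρ *ᵥ x) =
      ∑ i : Fin m, (x i.castSucc - x (Fin.last m) * a i) ^ 2
        - ρ ^ 2 * x (Fin.last m) ^ 2 := by
  simp only [dotProduct, mulVec, ballMat, Fin.sum_univ_castSucc, Fin.val_castSucc, Fin.is_lt,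
    dif_pos, Fin.val_last, lt_irrefl, Fin.eta, dite_false, Fin.castSucc_inj, ite_mul,
    one_mul, zero_mul, Finset.sum_ite_eq, Finset.mem_univ, if_true]
  set t := x (Fin.last m)
  have expand : ∑ i, (x i.castSucc - t * a i) ^ 2 = ∑ i, (x i.castSucc * (x i.castSucc + -a i * t)
      + t * (-a i * x i.castSucc) + t * a i ^ 2 * t) :=
    Finset.sum_congr rfl fun i _ => by ring
  rw [expand, Finset.sum_add_distrib, Finset.sum_add_distrib, ← Finset.mul_sum, ← Finset.sum_mul,
    ← Finset.mul_sum]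
  ring

lemma one_le_sum_sq_sub_of_ne {ι : Type*} [Fintype ι] {a₁ a₂ : ι → ℤ} (ha : a₁ ≠ a₂) :
    1 ≤ ∑ k, ((a₁ k : ℝ) - a₂ k) ^ 2 := by
  obtain ⟨k, hk⟩ := Function.ne_iff.mp ha
  have hk' : 1 ≤ ((a₁ k : ℝ) - a₂ k) ^ 2 := by
    rw [one_le_sq_iff_one_le_abs]
    exact_mod_cast Int.one_le_abs (sub_ne_zero.mpr hk)
  exact hk'.trans <| Finset.single_le_sum (f := fun i => ((a₁ i : ℝ) - a₂ i) ^ 2)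
    (fun i _ => sq_nonneg _) (Finset.mem_univ k)

lemma ballMat_add_posSemidef_of_sq_le (m : ℕ) (a₁ a₂ : Fin m → ℝ) (ρ₁ ρ₂ : ℝ)
    (h : 2 * (ρ₁ ^ 2 + ρ₂ ^ 2) ≤ ∑ k, (a₁ k - a₂ k) ^ 2) :
    (ballMat m a₁ ρ₁ + ballMat m a₂ ρ₂).PosSemidef := by
  refine posSemidef_iff_dotProduct_mulVec.mpr
    ⟨(ballMat_isHermitian m a₁ ρ₁).add (ballMat_isHermitian m a₂ ρ₂), fun x => ?_⟩
  simp only [star_trivial, add_mulVec, dotProduct_add, dotProduct_ballMat_mulVec]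
  set t := x (Fin.last m)
  have parallelogram : t ^ 2 * ∑ k, (a₁ k - a₂ k) ^ 2 ≤
      2 * (∑ k, (x k.castSucc - t * a₁ k) ^ 2 + ∑ k, (x k.castSucc - t * a₂ k) ^ 2) := by
    rw [← Finset.sum_add_distrib, Finset.mul_sum, Finset.mul_sum]
    refine Finset.sum_le_sum fun k _ => ?_
    nlinarith [sq_nonneg (x k.castSucc - t * a₁ k + (x k.castSucc - t * a₂ k))]
  linarith [mul_le_mul_of_nonneg_left h (sq_nonneg t)]

theorem ballMat_add_posSemidef_general (m : ℕ)
    (a₁ a₂ : Fin m → ℤ) (ha : a₁ ≠ a₂)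
    (ρ₁ ρ₂ : ℝ) (hρ₁ : 0 < ρ₁) (hρ₁' : ρ₁ ≤ 1 / 2) (hρ₂ : 0 < ρ₂) (hρ₂' : ρ₂ ≤ 1 / 2) :
    (ballMat m (fun k => (a₁ k : ℝ)) ρ₁ + ballMat m (fun k => (a₂ k : ℝ)) ρ₂).PosSemidef := by
  apply ballMat_add_posSemidef_of_sq_le
  have hρ : 2 * (ρ₁ ^ 2 + ρ₂ ^ 2) ≤ 1 := by nlinarith
  exact hρ.trans (one_le_sum_sq_sub_of_ne ha)

/-- for distinct integer vectors `a₁ ≠ a₂` and `ρ₁, ρ₂ ∈ (0, 1/2]`,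
`B(a₁,ρ₁) + B(a₂,ρ₂)` is positive semidefinite. -/
theorem ballMat_add_posSemidef (m : ℕ) (hm : 1 ≤ m)
    (a₁ a₂ : Fin m → ℤ) (ha : a₁ ≠ a₂)
    (ρ₁ ρ₂ : ℝ) (hρ₁ : 0 < ρ₁) (hρ₁' : ρ₁ ≤ 1 / 2) (hρ₂ : 0 < ρ₂) (hρ₂' : ρ₂ ≤ 1 / 2) :
    (ballMat m (fun k => (a₁ k : ℝ)) ρ₁ + ballMat m (fun k => (a₂ k : ℝ)) ρ₂).PosSemidef :=
  ballMat_add_posSemidef_general m a₁ a₂ ha ρ₁ ρ₂ hρ₁ hρ₁' hρ₂ hρ₂'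
end

section
/- Let Q, B², B³, H ∈ S³ be defined by: Q has rows (−1,−1,0), (−1,−1,0), (0,0,0); B² has rows (0,0,1/2), (0,0,1/2), (1/2,1/2,2); B³ has rows (0,0,−1/2), (0,0,−1/2), (−1/2,−1/2,2); H = diag(0,0,1). For every t ≥ 2, the matrix X(t) with rows (t,0,1), (0,t,1), (1,1,1) is positive semidefinite and satisfies B²•X(t) ≥ 0, B³•X(t) ≥ 0, H•X(t) = 1, and Q•X(t) = −2t. Consequently, the set {Q•X : X ∈ S³_+, B²•X ≥ 0, B³•X ≥ 0, H•X = 1} is not bounded below. -/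
/-! `X(t)` is `½ (u uᵀ + w wᵀ) + (t - 2) diag(1,1,0)` with `u = (2,0,1)`, `w = (0,2,1)`, a sum of
positive semidefinite matrices once `t ≥ 2`. The constraint values `B²•X(t) = 4`, `B³•X(t) = 0`,
`H•X(t) = 1` do not depend on `t`, while the objective `Q•X(t) = -2t` tends to `-∞`. -/

open Matrix

/-- The objective matrix `Q` of Instance 2.7. -/
noncomputable def Qc : Matrix (Fin 3) (Fin 3) ℝ :=
  !![-1, -1, 0; -1, -1, 0; 0, 0, 0]

/-- The constraint matrix `B²` of Instance 2.7. -/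
noncomputable def B2c : Matrix (Fin 3) (Fin 3) ℝ :=
  !![0, 0, 1 / 2; 0, 0, 1 / 2; 1 / 2, 1 / 2, 2]

/-- The constraint matrix `B³` of Instance 2.7. -/
noncomputable def B3c : Matrix (Fin 3) (Fin 3) ℝ :=
  !![0, 0, -(1 / 2); 0, 0, -(1 / 2); -(1 / 2), -(1 / 2), 2]

/-- The matrix `H = diag(0,0,1)`. -/
noncomputable def Hc : Matrix (Fin 3) (Fin 3) ℝ :=
  !![0, 0, 0; 0, 0, 0; 0, 0, 1]

/-- The feasible family `X(t)` of Instance 2.7. -/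
noncomputable def Xc (t : ℝ) : Matrix (Fin 3) (Fin 3) ℝ :=
  !![t, 0, 1; 0, t, 1; 1, 1, 1]

open Filter

theorem Filter.Tendsto.not_bddBelow_of_eventually_mem {α β : Type*} [Preorder β] [NoMinOrder β]
    {l : Filter α} [l.NeBot] {f : α → β} {s : Set β} (hf : Tendsto f l atBot)
    (hs : ∀ᶠ x in l, f x ∈ s) : ¬BddBelow s := by
  rintro ⟨m, hm⟩
  obtain ⟨x, hxs, hxm⟩ := (hs.and (hf.eventually_lt_atBot m)).exists
  exact (hm hxs).not_gt hxm

theorem Xc_eq (t : ℝ) :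
    Xc t = (1 / 2 : ℝ) • (vecMulVec ![2, 0, 1] ![2, 0, 1] + vecMulVec ![0, 2, 1] ![0, 2, 1])
      + (t - 2) • diagonal ![1, 1, 0] := by
  ext i j
  fin_cases i <;> fin_cases j <;> norm_num [Xc, vecMulVec]

theorem Xc_posSemidef {t : ℝ} (ht : 2 ≤ t) : (Xc t).PosSemidef := by
  have hu := posSemidef_vecMulVec_self_star (![2, 0, 1] : Fin 3 → ℝ)
  have hw := posSemidef_vecMulVec_self_star (![0, 2, 1] : Fin 3 → ℝ)
  have hd : (diagonal ![1, 1, 0] : Matrix (Fin 3) (Fin 3) ℝ).PosSemidef :=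
    PosSemidef.diagonal fun i => by fin_cases i <;> norm_num
  rw [Xc_eq]
  simp only [star_trivial] at hu hw
  exact ((hu.add hw).smul (by norm_num)).add (hd.smul (by linarith))

theorem sum_B2c_mul_Xc (t : ℝ) : ∑ i, ∑ j, B2c i j * Xc t i j = 4 := by
  simp only [Fin.sum_univ_three, of_apply, cons_val', cons_val, cons_val_fin_one, B2c, Xc]
  norm_num

theorem sum_B3c_mul_Xc (t : ℝ) : ∑ i, ∑ j, B3c i j * Xc t i j = 0 := by
  simp only [Fin.sum_univ_three, of_apply, cons_val', cons_val, cons_val_fin_one, B3c, Xc]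
  norm_num

theorem sum_Hc_mul_Xc (t : ℝ) : ∑ i, ∑ j, Hc i j * Xc t i j = 1 := by
  simp [Hc, Xc, Fin.sum_univ_three]

theorem sum_Qc_mul_Xc (t : ℝ) : ∑ i, ∑ j, Qc i j * Xc t i j = -2 * t := by
  simp only [Fin.sum_univ_three, of_apply, cons_val', cons_val, cons_val_fin_one, Qc, Xc]
  ring

/-- for every `t ≥ 2`, `X(t)` is feasible for the SDP relaxation with
objective value `-2t`; consequently the SDP value set is not bounded below. -/
theorem sdp_unbounded_instance :
    (∀ t : ℝ, 2 ≤ t → (Xc t).PosSemidef ∧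
      0 ≤ (∑ i, ∑ j, B2c i j * Xc t i j) ∧
      0 ≤ (∑ i, ∑ j, B3c i j * Xc t i j) ∧
      (∑ i, ∑ j, Hc i j * Xc t i j) = 1 ∧
      (∑ i, ∑ j, Qc i j * Xc t i j) = -2 * t) ∧
    ¬ BddBelow {v : ℝ | ∃ X : Matrix (Fin 3) (Fin 3) ℝ, X.PosSemidef ∧
        0 ≤ (∑ i, ∑ j, B2c i j * X i j) ∧
        0 ≤ (∑ i, ∑ j, B3c i j * X i j) ∧
        (∑ i, ∑ j, Hc i j * X i j) = 1 ∧
        v = ∑ i, ∑ j, Qc i j * X i j} := by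
  have feasible (t : ℝ) (ht : 2 ≤ t) : (Xc t).PosSemidef ∧
      0 ≤ (∑ i, ∑ j, B2c i j * Xc t i j) ∧
      0 ≤ (∑ i, ∑ j, B3c i j * Xc t i j) ∧
      (∑ i, ∑ j, Hc i j * Xc t i j) = 1 ∧
      (∑ i, ∑ j, Qc i j * Xc t i j) = -2 * t := by
    rw [sum_B2c_mul_Xc, sum_B3c_mul_Xc]
    exact ⟨Xc_posSemidef ht, zero_le_four, le_rfl, sum_Hc_mul_Xc t, sum_Qc_mul_Xc t⟩
  refine ⟨feasible, Tendsto.not_bddBelow_of_eventually_mem (f := fun t : ℝ => -2 * t)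
    (tendsto_id.const_mul_atTop_of_neg (by norm_num)) ?_⟩
  filter_upwards [eventually_ge_atTop 2] with t ht
  obtain ⟨hX, hB2, hB3, hH, hQ⟩ := feasible t ht
  exact ⟨Xc t, hX, hB2, hB3, hH, hQ.symm⟩
end

section
/- Let 𝓑 = {B^1, …, B^m} ⊆ S^n satisfy Condition (B), and let H ∈ S^n. Suppose X̄ ∈ S^n_+ satisfies B^k•X̄ ≥ 0 for all k, H•X̄ = 1, B^{k_0}•X̄ = 0 for some index k_0, and suppose Ȳ ∈ S^n_+ satisfies Ȳ•X̄ = 0. Then there exists x ∈ ℝ^n such that the rank-one matrix X̃ = xxᵀ satisfies B^k•X̃ ≥ 0 for all k, H•X̃ = 1, and Ȳ•X̃ = 0. -/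
/-!
Write `X̄ = ∑ xₖxₖᵀ`. Since `B^{k₀} • X̄ = 0`, the values `xₖᵀB^{k₀}xₖ` sum to zero, and the
Sturm–Zhang rotation trick turns the decomposition into one with every `xₖᵀB^{k₀}xₖ = 0`.
Each `xₖxₖᵀ` is then feasible by Condition (B), complementary to `Ȳ` because the nonnegative
numbers `xₖᵀȲxₖ` sum to `Ȳ • X̄ = 0`, and one of them has `xₖᵀHxₖ > 0` because these sum
to `1`; rescaling that `xₖ` gives `x`.
-/

open Matrix

lemma vecMulVec_rotate_add_rotate {ι R : Type*} [CommRing R] {a b : ι → R} {c s : R}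
    (hcs : c ^ 2 + s ^ 2 = 1) :
    vecMulVec (c • a + s • b) (c • a + s • b) +
        vecMulVec (-s • a + c • b) (-s • a + c • b) = vecMulVec a a + vecMulVec b b := by
  ext i j
  simp only [Matrix.add_apply, vecMulVec_apply, Pi.add_apply, Pi.smul_apply, smul_eq_mul]
  linear_combination (a i * a j + b i * b j) * hcs

section Multiset

variable {α M : Type*} [AddCommGroup M] [LinearOrder M] [IsOrderedAddMonoid M]
  {f : α → M} {s : Multiset α}

lemma Multiset.exists_mem_pos_of_sum_map_pos (hs : 0 < (s.map f).sum) : ∃ x ∈ s, 0 < f x := by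
  by_contra! hpos
  have := Multiset.sum_map_le_sum_map f 0 hpos
  simp only [Pi.zero_apply, Multiset.map_const', Multiset.sum_replicate, smul_zero] at this
  exact this.not_gt hs

lemma Multiset.exists_mem_pos_of_sum_map_eq_zero (hs : (s.map f).sum = 0)
    (hne : ∃ x ∈ s, f x ≠ 0) : ∃ x ∈ s, 0 < f x := by
  by_contra! hpos
  obtain ⟨x, hx, hfx⟩ := hne
  have := Multiset.sum_lt_sum (s := s) hpos ⟨x, hx, lt_of_le_of_ne (hpos x hx) hfx⟩
  simp [hs] at this

end Multiset

section RankOneDecomposition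

variable {ι : Type*} [Fintype ι]

/-- The paper's trace inner product `A • X`, as a function of `X`. -/
def traceInner {R : Type*} [CommSemiring R] (A : Matrix ι ι R) : Matrix ι ι R →+ R where
  toFun X := ∑ i, ∑ j, A i j * X i j
  map_zero' := by simp
  map_add' X Y := by simp [mul_add, Finset.sum_add_distrib]

lemma traceInner_vecMulVec {R : Type*} [CommSemiring R] (A : Matrix ι ι R) (x : ι → R) :
    traceInner A (vecMulVec x x) = x ⬝ᵥ A *ᵥ x := by
  simp only [traceInner, AddMonoidHom.coe_mk, ZeroHom.coe_mk, vecMulVec_apply, dotProduct,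
    mulVec, Finset.mul_sum]
  exact Finset.sum_congr rfl fun i _ => Finset.sum_congr rfl fun j _ => by ring

lemma traceInner_sum_vecMulVec {R : Type*} [CommSemiring R] (A : Matrix ι ι R)
    (s : Multiset (ι → R)) :
    traceInner A (s.map fun x => vecMulVec x x).sum = (s.map fun x => x ⬝ᵥ A *ᵥ x).sum := by
  simp [map_multiset_sum, Multiset.map_map, traceInner_vecMulVec]

lemma Matrix.PosSemidef.exists_multiset_sum_vecMulVec {X : Matrix ι ι ℝ} (hX : X.PosSemidef) :
    ∃ s : Multiset (ι → ℝ), (s.map fun x => vecMulVec x x).sum = X := by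
  obtain ⟨m, v, rfl⟩ := Matrix.posSemidef_iff_eq_sum_vecMulVec.mp hX
  exact ⟨Finset.univ.val.map v, by simp [Function.comp_def, Finset.sum_eq_multiset_sum]⟩

lemma dotProduct_mulVec_smul_self (A : Matrix ι ι ℝ) (c : ℝ) (x : ι → ℝ) :
    (c • x) ⬝ᵥ A *ᵥ (c • x) = c * c * (x ⬝ᵥ A *ᵥ x) := by
  simp only [mulVec_smul, dotProduct_smul, smul_dotProduct, smul_eq_mul]
  ring

/-- The rotation `(cos t • a + sin t • b, -sin t • a + cos t • b)` preserves `aaᵀ + bbᵀ`, and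
the intermediate value theorem on `[0, π/2]` finds a `t` killing the first quadratic value. -/
lemma exists_dotProduct_mulVec_eq_zero_vecMulVec_add_eq (B : Matrix ι ι ℝ) {a b : ι → ℝ}
    (ha : 0 ≤ a ⬝ᵥ B *ᵥ a) (hb : b ⬝ᵥ B *ᵥ b ≤ 0) :
    ∃ u w : ι → ℝ, u ⬝ᵥ B *ᵥ u = 0 ∧
      vecMulVec u u + vecMulVec w w = vecMulVec a a + vecMulVec b b := by
  let rot : ℝ → ι → ℝ := fun t => Real.cos t • a + Real.sin t • b
  have hcont : Continuous fun t => rot t ⬝ᵥ B *ᵥ rot t := by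
    unfold rot
    fun_prop
  obtain ⟨t, -, ht⟩ := intermediate_value_Icc' Real.pi_div_two_pos.le hcont.continuousOn
    (show (0 : ℝ) ∈ _ by simpa [rot] using And.intro hb ha)
  exact ⟨rot t, -Real.sin t • a + Real.cos t • b, ht,
    vecMulVec_rotate_add_rotate (Real.cos_sq_add_sin_sq t)⟩

/-- Sturm–Zhang: each rotation of a pair with opposite signs removes one vector from the part
of the decomposition on which the quadratic form is not yet zero. -/
theorem exists_multiset_sum_vecMulVec_eq_forall_dotProduct_mulVec_eq_zero (B : Matrix ι ι ℝ)
    (s : Multiset (ι → ℝ)) (hs : (s.map fun x => x ⬝ᵥ B *ᵥ x).sum = 0) :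
    ∃ t : Multiset (ι → ℝ),
      (t.map fun x => vecMulVec x x).sum = (s.map fun x => vecMulVec x x).sum ∧
        ∀ x ∈ t, x ⬝ᵥ B *ᵥ x = 0 := by
  by_cases hzero : ∀ x ∈ s, x ⬝ᵥ B *ᵥ x = 0
  · exact ⟨s, rfl, hzero⟩
  push Not at hzero
  obtain ⟨a, ha, hqa⟩ := Multiset.exists_mem_pos_of_sum_map_eq_zero hs hzero
  obtain ⟨b, hb, hqb⟩ := Multiset.exists_mem_pos_of_sum_map_eq_zero (s := s)
    (f := fun x => -(x ⬝ᵥ B *ᵥ x)) (by simp [Multiset.sum_map_neg, hs]) (by simpa using hzero)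
  have hba : b ≠ a := fun h => by subst h; linarith
  obtain ⟨r, rfl⟩ : ∃ r, s = a ::ₘ b ::ₘ r :=
    ⟨(s.erase a).erase b, by
      rw [Multiset.cons_erase (Multiset.mem_erase_of_ne hba |>.2 hb), Multiset.cons_erase ha]⟩
  obtain ⟨u, w, hu, huw⟩ :=
    exists_dotProduct_mulVec_eq_zero_vecMulVec_add_eq B hqa.le (neg_pos.1 hqb).le
  have hquw := congrArg (traceInner B) huw
  simp only [map_add, traceInner_vecMulVec, hu, zero_add] at hquw
  obtain ⟨t, ht, ht0⟩ :=
    exists_multiset_sum_vecMulVec_eq_forall_dotProduct_mulVec_eq_zero B (w ::ₘ r) (by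
      simp only [Multiset.map_cons, Multiset.sum_cons] at hs ⊢
      linarith)
  refine ⟨u ::ₘ t, ?_, ?_⟩
  · simp only [Multiset.map_cons, Multiset.sum_cons, ht, ← add_assoc, huw]
  · simpa [hu] using ht0
termination_by Multiset.card s
decreasing_by subst_vars; simp

end RankOneDecomposition

theorem rankOne_solution_of_active_constraint_general (n m : ℕ)
    (B : Fin m → Matrix (Fin n) (Fin n) ℝ)
    (H : Matrix (Fin n) (Fin n) ℝ)
    (hCondB : ∀ k : Fin m, ∀ X : Matrix (Fin n) (Fin n) ℝ, X.PosSemidef →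
      (∑ i, ∑ j, B k i j * X i j) = 0 → ∀ l : Fin m, 0 ≤ ∑ i, ∑ j, B l i j * X i j)
    (Xb : Matrix (Fin n) (Fin n) ℝ) (hXb : Xb.PosSemidef)
    (hHX : (∑ i, ∑ j, H i j * Xb i j) = 1)
    (k₀ : Fin m) (hk₀ : (∑ i, ∑ j, B k₀ i j * Xb i j) = 0)
    (Yb : Matrix (Fin n) (Fin n) ℝ) (hYb : Yb.PosSemidef)
    (hYX : (∑ i, ∑ j, Yb i j * Xb i j) = 0) :
    ∃ x : Fin n → ℝ,
      (∀ k : Fin m, 0 ≤ ∑ i, ∑ j, B k i j * vecMulVec x x i j) ∧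
      (∑ i, ∑ j, H i j * vecMulVec x x i j) = 1 ∧
      (∑ i, ∑ j, Yb i j * vecMulVec x x i j) = 0 := by
  obtain ⟨s, rfl⟩ := hXb.exists_multiset_sum_vecMulVec
  obtain ⟨t, ht, htB⟩ :=
    exists_multiset_sum_vecMulVec_eq_forall_dotProduct_mulVec_eq_zero (B k₀) s
      ((traceInner_sum_vecMulVec (B k₀) s).symm.trans hk₀)
  rw [← ht] at hHX hYX
  replace hHX : (t.map fun x => x ⬝ᵥ H *ᵥ x).sum = 1 :=
    (traceInner_sum_vecMulVec H t).symm.trans hHX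
  replace hYX : (t.map fun x => x ⬝ᵥ Yb *ᵥ x).sum = 0 :=
    (traceInner_sum_vecMulVec Yb t).symm.trans hYX
  obtain ⟨x, hxt, hHx⟩ := Multiset.exists_mem_pos_of_sum_map_pos (hHX ▸ one_pos)
  have hYx : x ⬝ᵥ Yb *ᵥ x = 0 := Multiset.all_zero_of_le_zero_le_of_sum_eq_zero
    (by simpa using fun y _ => hYb.dotProduct_mulVec_nonneg y) hYX _ (Multiset.mem_map_of_mem _ hxt)
  have hrankOne (A : Matrix (Fin n) (Fin n) ℝ) (z : Fin n → ℝ) :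
      ∑ i, ∑ j, A i j * vecMulVec z z i j = z ⬝ᵥ A *ᵥ z :=
    traceInner_vecMulVec A z
  have hfeas (l : Fin m) : 0 ≤ x ⬝ᵥ B l *ᵥ x := by
    simpa [hrankOne] using hCondB k₀ (vecMulVec x x)
      (by simpa using posSemidef_vecMulVec_self_star x) (by rw [hrankOne]; exact htB x hxt) l
  set y := (√(x ⬝ᵥ H *ᵥ x))⁻¹ • x
  have hy (A : Matrix (Fin n) (Fin n) ℝ) :
      ∑ i, ∑ j, A i j * vecMulVec y y i j = (x ⬝ᵥ H *ᵥ x)⁻¹ * (x ⬝ᵥ A *ᵥ x) := by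
    rw [hrankOne, dotProduct_mulVec_smul_self, ← mul_inv, Real.mul_self_sqrt hHx.le]
  refine ⟨y, fun l => ?_, ?_, ?_⟩ <;> rw [hy]
  · exact mul_nonneg (inv_nonneg.2 hHx.le) (hfeas l)
  · exact inv_mul_cancel₀ hHx.ne'
  · rw [hYx, mul_zero]

/-- under Condition (B), from an SDP-feasible `X̄` with an active
constraint `B^{k₀} • X̄ = 0` and a PSD `Ȳ` with `Ȳ • X̄ = 0`, one can extract a
rank-one matrix `X̃ = xxᵀ` that is feasible and still complementary to `Ȳ`. -/
theorem rankOne_solution_of_active_constraint (n m : ℕ)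
    (B : Fin m → Matrix (Fin n) (Fin n) ℝ) (hBsym : ∀ k, (B k).IsSymm)
    (H : Matrix (Fin n) (Fin n) ℝ) (hH : H.IsSymm)
    (hCondB : ∀ k : Fin m, ∀ X : Matrix (Fin n) (Fin n) ℝ, X.PosSemidef →
      (∑ i, ∑ j, B k i j * X i j) = 0 → ∀ l : Fin m, 0 ≤ ∑ i, ∑ j, B l i j * X i j)
    (Xb : Matrix (Fin n) (Fin n) ℝ) (hXb : Xb.PosSemidef)
    (hfeas : ∀ k : Fin m, 0 ≤ ∑ i, ∑ j, B k i j * Xb i j)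
    (hHX : (∑ i, ∑ j, H i j * Xb i j) = 1)
    (k₀ : Fin m) (hk₀ : (∑ i, ∑ j, B k₀ i j * Xb i j) = 0)
    (Yb : Matrix (Fin n) (Fin n) ℝ) (hYb : Yb.PosSemidef)
    (hYX : (∑ i, ∑ j, Yb i j * Xb i j) = 0) :
    ∃ x : Fin n → ℝ,
      (∀ k : Fin m, 0 ≤ ∑ i, ∑ j, B k i j * vecMulVec x x i j) ∧
      (∑ i, ∑ j, H i j * vecMulVec x x i j) = 1 ∧
      (∑ i, ∑ j, Yb i j * vecMulVec x x i j) = 0 :=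
  rankOne_solution_of_active_constraint_general n m B H hCondB Xb hXb hHX k₀ hk₀ Yb hYb hYX
end

section
/- Let H ∈ S^n, and suppose X̄ ∈ S^n_+ satisfies H•X̄ = 1 and Ȳ ∈ S^n_+ satisfies Ȳ•X̄ = 0. Let r = rank X̄. Then r ≥ 1, and there exists x ∈ ℝ^n such that the rank-one matrix X̃ = xxᵀ satisfies H•X̃ = 1 and Ȳ•X̃ = 0; moreover x can be chosen of the form x = x_j/√τ where X̄ = Σ_{i=1}^r x_i x_iᵀ is a rank-one decomposition, τ = x_jᵀHx_j ≥ 1/r, and Ȳ•x_i x_iᵀ = 0 for every i = 1, …, r. -/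
/-! Diagonalizing `X̄` and dropping the zero eigenvalues writes `X̄ = ∑ xᵢxᵢᵀ` with exactly
`r = rank X̄` terms. Then `H • X̄ = ∑ xᵢᵀHxᵢ = 1`, so some `τ = xⱼᵀHxⱼ` is at least the average
`1/r` (and `r ≥ 1`), while `Ȳ • X̄ = ∑ xᵢᵀȲxᵢ = 0` is a sum of nonnegative terms, so each term
vanishes. Rescaling `xⱼ` by `1/√τ` normalizes `H • X̃` to `1`. -/

open Matrix

namespace Matrix

variable {m n R : Type*} [Fintype n]

section CommSemiring
variable [CommSemiring R]

theorem sum_sum_mul_vecMulVec (M : Matrix n n R) (u v : n → R) :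
    ∑ a, ∑ b, M a b * vecMulVec u v a b = u ⬝ᵥ M *ᵥ v := by
  simp only [vecMulVec_apply, dotProduct, mulVec, Finset.mul_sum]
  exact Finset.sum_congr rfl fun a _ ↦ Finset.sum_congr rfl fun b _ ↦ by ring

theorem sum_sum_mul_sum {ι : Type*} [Fintype ι] (M : Matrix n n R) (N : ι → Matrix n n R) :
    ∑ a, ∑ b, M a b * (∑ k, N k : Matrix n n R) a b = ∑ k, ∑ a, ∑ b, M a b * N k a b := by
  simp only [sum_apply, Finset.mul_sum]
  conv_lhs => enter [2, a]; rw [Finset.sum_comm]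
  exact Finset.sum_comm

theorem mul_diagonal_mul_transpose_eq_sum [DecidableEq n] (U : Matrix m n R) (d : n → R) :
    U * diagonal d * Uᵀ = ∑ i, d i • vecMulVec (fun a ↦ U a i) (fun a ↦ U a i) := by
  ext a b
  rw [mul_apply]
  simp only [mul_diagonal, transpose_apply, sum_apply, smul_apply, vecMulVec_apply,
    smul_eq_mul]
  exact Finset.sum_congr rfl fun i _ ↦ by ring

end CommSemiring

theorem PosSemidef.exists_eq_sum_vecMulVec_self_rank [DecidableEq n] {A : Matrix n n ℝ}
    (hA : A.PosSemidef) : ∃ x : Fin A.rank → n → ℝ, A = ∑ i, vecMulVec (x i) (x i) := by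
  let d := hA.1.eigenvalues
  let U : Matrix n n ℝ := hA.1.eigenvectorUnitary
  let v : n → n → ℝ := fun i ↦ √(d i) • fun a ↦ U a i
  have hAv : A = ∑ i, vecMulVec (v i) (v i) := by
    conv_lhs => rw [hA.1.spectral_theorem, Unitary.conjStarAlgAut_apply]
    simp only [star_eq_conjTranspose, conjTranspose_eq_transpose_of_trivial,
      RCLike.ofReal_real_eq_id, Function.id_comp]
    rw [mul_diagonal_mul_transpose_eq_sum]
    refine Finset.sum_congr rfl fun i _ ↦ ?_
    rw [smul_vecMulVec, vecMulVec_smul, smul_smul, Real.mul_self_sqrt (hA.eigenvalues_nonneg i)]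
  have hv : ∀ i, d i = 0 → v i = 0 := fun i hi ↦ by simp [v, hi]
  let e : Fin A.rank ≃ {i // d i ≠ 0} :=
    (Fintype.equivFinOfCardEq hA.1.rank_eq_card_non_zero_eigs.symm).symm
  refine ⟨fun k ↦ v (e k), ?_⟩
  rw [Equiv.sum_comp e (fun i ↦ vecMulVec (v i) (v i)), hAv,
    ← Fintype.sum_subtype_add_sum_subtype (fun i ↦ d i ≠ 0), add_eq_left]
  exact Finset.sum_eq_zero fun i _ ↦ by rw [hv i (not_not.mp i.2), zero_vecMulVec]

theorem inv_sqrt_smul_dotProduct_mulVec_inv_sqrt_smul (M : Matrix n n ℝ) (u : n → ℝ) {τ : ℝ}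
    (hτ : 0 ≤ τ) : ((√τ)⁻¹ • u) ⬝ᵥ M *ᵥ ((√τ)⁻¹ • u) = (u ⬝ᵥ M *ᵥ u) / τ := by
  rw [smul_dotProduct, mulVec_smul, dotProduct_smul, smul_eq_mul, smul_eq_mul, ← mul_assoc,
    ← mul_inv, Real.mul_self_sqrt hτ, inv_mul_eq_div]

end Matrix

theorem Finset.exists_one_div_card_le_of_sum_eq_one {ι K : Type*} [Fintype ι] [Field K]
    [LinearOrder K] [IsStrictOrderedRing K] {f : ι → K} (hf : ∑ i, f i = 1) :
    ∃ j, 1 / (Fintype.card ι : K) ≤ f j := by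
  obtain ⟨j₀, -, -⟩ := Finset.exists_ne_zero_of_sum_ne_zero (hf ▸ one_ne_zero : ∑ i, f i ≠ 0)
  have : Nonempty ι := ⟨j₀⟩
  obtain ⟨j, -, hj⟩ := Finset.exists_le_of_sum_le (f := fun _ ↦ 1 / (Fintype.card ι : K)) (g := f)
    Finset.univ_nonempty (by
      rw [hf, Finset.sum_const, Finset.card_univ, nsmul_eq_mul,
        mul_one_div_cancel (Nat.cast_ne_zero.mpr Fintype.card_ne_zero)])
  exact ⟨j, hj⟩

theorem rankOne_solution_case_ii_general (n : ℕ)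
    (H : Matrix (Fin n) (Fin n) ℝ)
    (Xb : Matrix (Fin n) (Fin n) ℝ) (hXb : Xb.PosSemidef)
    (hHX : (∑ i, ∑ j, H i j * Xb i j) = 1)
    (Yb : Matrix (Fin n) (Fin n) ℝ) (hYb : Yb.PosSemidef)
    (hYX : (∑ i, ∑ j, Yb i j * Xb i j) = 0) :
    1 ≤ Xb.rank ∧
    ∃ (x : Fin Xb.rank → Fin n → ℝ) (j : Fin Xb.rank) (τ : ℝ),
      Xb = ∑ i, vecMulVec (x i) (x i) ∧
      (∀ i, (∑ a, ∑ b, Yb a b * vecMulVec (x i) (x i) a b) = 0) ∧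
      τ = (x j) ⬝ᵥ H.mulVec (x j) ∧
      1 / (Xb.rank : ℝ) ≤ τ ∧
      (∑ a, ∑ b, H a b *
        vecMulVec ((Real.sqrt τ)⁻¹ • x j) ((Real.sqrt τ)⁻¹ • x j) a b) = 1 ∧
      (∑ a, ∑ b, Yb a b *
        vecMulVec ((Real.sqrt τ)⁻¹ • x j) ((Real.sqrt τ)⁻¹ • x j) a b) = 0 := by
  obtain ⟨x, hXx⟩ := hXb.exists_eq_sum_vecMulVec_self_rank
  have hH : ∑ k, x k ⬝ᵥ H *ᵥ x k = 1 := by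
    simpa only [hXx, sum_sum_mul_sum, sum_sum_mul_vecMulVec] using hHX
  have hY : ∀ k, x k ⬝ᵥ Yb *ᵥ x k = 0 := by
    have hsum : ∑ k, x k ⬝ᵥ Yb *ᵥ x k = 0 := by
      simpa only [hXx, sum_sum_mul_sum, sum_sum_mul_vecMulVec] using hYX
    exact congrFun <| (Fintype.sum_eq_zero_iff_of_nonneg fun k ↦ by
      simpa using hYb.dotProduct_mulVec_nonneg (x k)).mp hsum
  obtain ⟨j, hj⟩ : ∃ j, 1 / (Xb.rank : ℝ) ≤ x j ⬝ᵥ H *ᵥ x j := by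
    simpa using Finset.exists_one_div_card_le_of_sum_eq_one hH
  have hτ : 0 < x j ⬝ᵥ H *ᵥ x j := (one_div_pos.mpr (Nat.cast_pos.mpr j.pos)).trans_le hj
  refine ⟨j.pos, x, j, _, hXx, fun i ↦ by rw [sum_sum_mul_vecMulVec, hY i], rfl, hj, ?_, ?_⟩
  · rw [sum_sum_mul_vecMulVec, inv_sqrt_smul_dotProduct_mulVec_inv_sqrt_smul _ _ hτ.le,
      div_self hτ.ne']
  · rw [sum_sum_mul_vecMulVec, inv_sqrt_smul_dotProduct_mulVec_inv_sqrt_smul _ _ hτ.le, hY j,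
      zero_div]

/-- case (ii) extraction. From `X̄ ∈ S^n_+` with `H • X̄ = 1` and a PSD
`Ȳ` with `Ȳ • X̄ = 0`, the rank `r` of `X̄` is at least 1 and there is a rank-one
decomposition `X̄ = Σ xᵢxᵢᵀ` with `Ȳ • xᵢxᵢᵀ = 0` for all `i`, an index `j` with
`τ = xⱼᵀHxⱼ ≥ 1/r`, and `X̃ = (xⱼ/√τ)(xⱼ/√τ)ᵀ` satisfies `H • X̃ = 1`, `Ȳ • X̃ = 0`. -/
theorem rankOne_solution_case_ii (n : ℕ)
    (H : Matrix (Fin n) (Fin n) ℝ) (hH : H.IsSymm)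
    (Xb : Matrix (Fin n) (Fin n) ℝ) (hXb : Xb.PosSemidef)
    (hHX : (∑ i, ∑ j, H i j * Xb i j) = 1)
    (Yb : Matrix (Fin n) (Fin n) ℝ) (hYb : Yb.PosSemidef)
    (hYX : (∑ i, ∑ j, Yb i j * Xb i j) = 0) :
    1 ≤ Xb.rank ∧
    ∃ (x : Fin Xb.rank → Fin n → ℝ) (j : Fin Xb.rank) (τ : ℝ),
      Xb = ∑ i, vecMulVec (x i) (x i) ∧
      (∀ i, (∑ a, ∑ b, Yb a b * vecMulVec (x i) (x i) a b) = 0) ∧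
      τ = (x j) ⬝ᵥ H.mulVec (x j) ∧
      1 / (Xb.rank : ℝ) ≤ τ ∧
      (∑ a, ∑ b, H a b *
        vecMulVec ((Real.sqrt τ)⁻¹ • x j) ((Real.sqrt τ)⁻¹ • x j) a b) = 1 ∧
      (∑ a, ∑ b, Yb a b *
        vecMulVec ((Real.sqrt τ)⁻¹ • x j) ((Real.sqrt τ)⁻¹ • x j) a b) = 0 :=
  rankOne_solution_case_ii_general n H Xb hXb hHX Yb hYb hYX
end
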